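/- arXiv:1401.4288 — 9 statements merged into one kernel-verified Lean document; each statement's English description precedes it below -/
import Mathlib

section
/- Let 0 < α < 1. For x,y ∈ R^n with x ≠ 0, write y = y_x + y_x' where y_x is the orthogonal projection of y onto the line spanned by x and y_x' = y - y_x (and y_x = y, y_x' = 0 if x = 0). Then the two conditions on a function f: (A) |f(x)-f(y)| ≤ K·min{|x-y|^α, (|x-y|/(1+|x|+|y|))^{α/2} + ((|x|+|y|)sinθ)^α} for all x,y, and (B) |f(x)-f(y)| ≤ K'·min{|x-y|^α, (|x-y_x|/(1+|x|))^{α/2} + |y_x'|^α} for all x,y, are equivalent, in the sense that (A) with constant K implies (B) with constant K' ≤ C·K and conversely, where C depends only on α and n. -/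
open Real MeasureTheory Set

open Classical in
noncomputable def sinAngle {n : ℕ} (x y : EuclideanSpace ℝ (Fin n)) : ℝ :=
  if x = 0 ∨ y = 0 then 0 else Real.sin (InnerProductGeometry.angle x y)

open Classical in
noncomputable def projPar {n : ℕ} (x y : EuclideanSpace ℝ (Fin n)) :
    EuclideanSpace ℝ (Fin n) :=
  if x = 0 then y else ((inner ℝ x y : ℝ) / ‖x‖ ^ 2) • x

noncomputable def projOrth {n : ℕ} (x y : EuclideanSpace ℝ (Fin n)) :
    EuclideanSpace ℝ (Fin n) :=
  y - projPar x y

/-!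
Let `p` be the projection of `y` on the line through `x`. For (A) ⇒ (B) go from `x` to `y`
through `p`: the pair `(x, p)` is collinear, so the angular term of (A) vanishes, and `p - y`
is the orthogonal part of `y`. For (B) ⇒ (A) it suffices, as (A) is symmetric, to treat
`‖y‖ ≤ ‖x‖`; then `‖x - p‖ ≤ ‖x - y‖`, `1 + ‖x‖ + ‖y‖ ≤ 2 (1 + ‖x‖)` and
`‖y - p‖ = ‖y‖ sin θ` bound modulus (B) by `2 ^ (α / 2)` times modulus (A).
So `C = 2 ^ (α / 2)` works in both directions.
-/

open InnerProductGeometry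

variable {n : ℕ}

lemma projPar_of_ne_zero {x : EuclideanSpace ℝ (Fin n)} (hx : x ≠ 0)
    (y : EuclideanSpace ℝ (Fin n)) : projPar x y = (ℝ ∙ x).starProjection y := by
  rw [projPar, if_neg hx, Submodule.starProjection_singleton, RCLike.ofReal_real_eq_id, id]

lemma sinAngle_nonneg (x y : EuclideanSpace ℝ (Fin n)) : 0 ≤ sinAngle x y := by
  unfold sinAngle
  split_ifs
  exacts [le_rfl, sin_angle_nonneg x y]

lemma sinAngle_comm (x y : EuclideanSpace ℝ (Fin n)) : sinAngle x y = sinAngle y x := by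
  simp only [sinAngle, or_comm, angle_comm]

lemma sinAngle_smul_right (x : EuclideanSpace ℝ (Fin n)) (c : ℝ) : sinAngle x (c • x) = 0 := by
  rw [sinAngle]
  split_ifs with h
  · rfl
  push Not at h
  have hx : x ≠ 0 := h.1
  rcases lt_trichotomy c 0 with hc | rfl | hc
  · rw [angle_smul_right_of_neg _ _ hc, angle_self_neg_of_nonzero hx, sin_pi]
  · simp at h
  · rw [angle_smul_right_of_pos _ _ hc, angle_self hx, sin_zero]

lemma sinAngle_projPar (x y : EuclideanSpace ℝ (Fin n)) : sinAngle x (projPar x y) = 0 := by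
  rcases eq_or_ne x 0 with rfl | hx
  · simp [sinAngle]
  · rw [projPar, if_neg hx]
    exact sinAngle_smul_right x _

lemma norm_sub_projPar_le (x y : EuclideanSpace ℝ (Fin n)) : ‖x - projPar x y‖ ≤ ‖x - y‖ := by
  rcases eq_or_ne x 0 with rfl | hx
  · simp [projPar]
  · have hPx : (ℝ ∙ x).starProjection x = x :=
      Submodule.starProjection_eq_self_iff.2 (Submodule.mem_span_singleton_self x)
    calc ‖x - projPar x y‖ = ‖(ℝ ∙ x).starProjection (x - y)‖ := by
          rw [projPar_of_ne_zero hx, map_sub, hPx]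
      _ ≤ ‖x - y‖ := Submodule.norm_starProjection_apply_le _ _

lemma norm_projOrth (x y : EuclideanSpace ℝ (Fin n)) : ‖projOrth x y‖ = ‖y‖ * sinAngle x y := by
  rcases eq_or_ne x 0 with rfl | hx
  · simp [projOrth, projPar, sinAngle]
  rcases eq_or_ne y 0 with rfl | hy
  · simp [projOrth, projPar, sinAngle]
  rw [sinAngle, if_neg (by tauto)]
  -- after multiplying by `‖x‖` both sides are `√(‖x‖² ‖y‖² - ⟪x, y⟫²)`
  apply mul_right_cancel₀ (norm_ne_zero_iff.2 hx)
  rw [show ‖y‖ * sin (angle x y) * ‖x‖ = sin (angle x y) * (‖x‖ * ‖y‖) by ring,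
    sin_angle_mul_norm_mul_norm,
    ← Real.sqrt_sq (by positivity : 0 ≤ ‖projOrth x y‖ * ‖x‖)]
  congr 1
  rw [projOrth, projPar, if_neg hx, mul_pow, norm_sub_sq_real, real_inner_smul_right, norm_smul,
    real_inner_self_eq_norm_sq, real_inner_self_eq_norm_sq, Real.norm_eq_abs, mul_pow, sq_abs,
    real_inner_comm]
  field_simp
  ring

section Modulus

variable (α : ℝ)

noncomputable def angularModulus (x y : EuclideanSpace ℝ (Fin n)) : ℝ :=
  (‖x - y‖ / (1 + ‖x‖ + ‖y‖)) ^ (α / 2) + ((‖x‖ + ‖y‖) * sinAngle x y) ^ α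

noncomputable def projModulus (x y : EuclideanSpace ℝ (Fin n)) : ℝ :=
  (‖x - projPar x y‖ / (1 + ‖x‖)) ^ (α / 2) + ‖projOrth x y‖ ^ α

lemma angularModulus_comm (x y : EuclideanSpace ℝ (Fin n)) :
    angularModulus α x y = angularModulus α y x := by
  rw [angularModulus, angularModulus, norm_sub_rev, add_comm ‖x‖ ‖y‖, add_right_comm,
    sinAngle_comm]

lemma angularModulus_nonneg (x y : EuclideanSpace ℝ (Fin n)) : 0 ≤ angularModulus α x y :=
  add_nonneg (by positivity) (rpow_nonneg (mul_nonneg (by positivity) (sinAngle_nonneg x y)) α)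

lemma projModulus_nonneg (x y : EuclideanSpace ℝ (Fin n)) : 0 ≤ projModulus α x y := by
  unfold projModulus
  positivity

variable {α}

lemma angularModulus_pos {x y : EuclideanSpace ℝ (Fin n)} (h : x ≠ y) :
    0 < angularModulus α x y := by
  have hxy : 0 < ‖x - y‖ := norm_pos_iff.2 (sub_ne_zero.2 h)
  exact add_pos_of_pos_of_nonneg (rpow_pos_of_pos (by positivity) _)
    (rpow_nonneg (mul_nonneg (by positivity) (sinAngle_nonneg x y)) α)

lemma projModulus_pos {x y : EuclideanSpace ℝ (Fin n)} (h : x ≠ y) :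
    0 < projModulus α x y := by
  rcases eq_or_ne x (projPar x y) with hp | hp
  · have : projOrth x y ≠ 0 := by rw [projOrth, ← hp]; exact sub_ne_zero.2 h.symm
    exact add_pos_of_nonneg_of_pos (by positivity) (rpow_pos_of_pos (norm_pos_iff.2 this) α)
  · have : 0 < ‖x - projPar x y‖ := norm_pos_iff.2 (sub_ne_zero.2 hp)
    exact add_pos_of_pos_of_nonneg (rpow_pos_of_pos (by positivity) _) (by positivity)

lemma angularModulus_projPar_le (hα : 0 < α) (x y : EuclideanSpace ℝ (Fin n)) :
    angularModulus α x (projPar x y) ≤ (‖x - projPar x y‖ / (1 + ‖x‖)) ^ (α / 2) := by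
  rw [angularModulus, sinAngle_projPar, mul_zero, zero_rpow hα.ne', add_zero]
  gcongr (_ / ?_) ^ _
  linarith [norm_nonneg (projPar x y)]

lemma projModulus_le_angularModulus (hα : 0 ≤ α) {x y : EuclideanSpace ℝ (Fin n)}
    (hyx : ‖y‖ ≤ ‖x‖) : projModulus α x y ≤ 2 ^ (α / 2) * angularModulus α x y := by
  have hratio : ‖x - projPar x y‖ / (1 + ‖x‖) ≤ 2 * (‖x - y‖ / (1 + ‖x‖ + ‖y‖)) := by
    rw [mul_div_assoc', div_le_div_iff₀ (by positivity) (by positivity)]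
    nlinarith [norm_sub_projPar_le x y, norm_nonneg (x - projPar x y), norm_nonneg y]
  have hsin : ‖projOrth x y‖ ≤ (‖x‖ + ‖y‖) * sinAngle x y := by
    rw [norm_projOrth]
    gcongr
    · exact sinAngle_nonneg x y
    · linarith [norm_nonneg x]
  have htwo : (1 : ℝ) ≤ 2 ^ (α / 2) := one_le_rpow one_le_two (by positivity)
  calc projModulus α x y
      ≤ (2 * (‖x - y‖ / (1 + ‖x‖ + ‖y‖))) ^ (α / 2) + ((‖x‖ + ‖y‖) * sinAngle x y) ^ α := by
        unfold projModulus
        gcongr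
    _ ≤ 2 ^ (α / 2) * angularModulus α x y := by
        rw [mul_rpow zero_le_two (by positivity), angularModulus, mul_add]
        gcongr
        exact le_mul_of_one_le_left
          (rpow_nonneg (mul_nonneg (by positivity) (sinAngle_nonneg x y)) α) htwo

end Modulus

section Holder

variable {α K : ℝ} {f : EuclideanSpace ℝ (Fin n) → ℝ}

variable (α K f) in
def AngularHolder : Prop :=
  ∀ x y, |f x - f y| ≤ K * min (‖x - y‖ ^ α) (angularModulus α x y)

variable (α K f) in
def ProjHolder : Prop :=
  ∀ x y, |f x - f y| ≤ K * min (‖x - y‖ ^ α) (projModulus α x y)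

lemma nonneg_of_abs_le_mul_min {d a b : ℝ} (ha : 0 < a) (hb : 0 < b) (h : |d| ≤ K * min a b) :
    0 ≤ K :=
  nonneg_of_mul_nonneg_left ((abs_nonneg d).trans h) (lt_min ha hb)

lemma mul_min_rpow_norm_sub_self (hα : 0 < α) {s : ℝ} (hs : 0 ≤ s)
    (x : EuclideanSpace ℝ (Fin n)) : K * min (‖x - x‖ ^ α) s = 0 := by
  rw [sub_self, norm_zero, zero_rpow hα.ne', min_eq_left hs, mul_zero]

theorem AngularHolder.projHolder (hα : 0 < α) (h : AngularHolder α K f) :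
    ProjHolder α (2 ^ (α / 2) * K) f := by
  intro x y
  rcases eq_or_ne x y with rfl | hxy
  · rw [sub_self, abs_zero, mul_min_rpow_norm_sub_self hα (projModulus_nonneg α x x)]
  have hK : 0 ≤ K := nonneg_of_abs_le_mul_min
    (rpow_pos_of_pos (norm_pos_iff.2 (sub_ne_zero.2 hxy)) α) (angularModulus_pos hxy) (h x y)
  have hdist : |f x - f y| ≤ K * ‖x - y‖ ^ α :=
    (h x y).trans (mul_le_mul_of_nonneg_left (min_le_left _ _) hK)
  set p := projPar x y
  have hpar : |f x - f p| ≤ K * (‖x - p‖ / (1 + ‖x‖)) ^ (α / 2) :=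
    (h x p).trans (mul_le_mul_of_nonneg_left
      ((min_le_right _ _).trans (angularModulus_projPar_le hα x y)) hK)
  have horth : |f p - f y| ≤ K * ‖projOrth x y‖ ^ α := by
    refine (h p y).trans (mul_le_mul_of_nonneg_left ((min_le_left _ _).trans_eq ?_) hK)
    rw [projOrth, norm_sub_rev]
  have hproj : |f x - f y| ≤ K * projModulus α x y := by
    rw [projModulus, mul_add]
    exact (abs_sub_le _ _ _).trans (add_le_add hpar horth)
  calc |f x - f y| ≤ K * min (‖x - y‖ ^ α) (projModulus α x y) := by
        rw [mul_min_of_nonneg _ _ hK]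
        exact le_min hdist hproj
    _ ≤ 2 ^ (α / 2) * K * min (‖x - y‖ ^ α) (projModulus α x y) := by
        rw [mul_assoc]
        exact le_mul_of_one_le_left (mul_nonneg hK (le_min (by positivity)
          (projModulus_nonneg α x y))) (one_le_rpow one_le_two (by positivity))

theorem ProjHolder.angularHolder (hα : 0 < α) (h : ProjHolder α K f) :
    AngularHolder α (2 ^ (α / 2) * K) f := by
  intro x y
  wlog hyx : ‖y‖ ≤ ‖x‖ generalizing x y
  · rw [abs_sub_comm, norm_sub_rev, angularModulus_comm]
    exact this y x (le_of_not_ge hyx)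
  rcases eq_or_ne x y with rfl | hxy
  · rw [sub_self, abs_zero, mul_min_rpow_norm_sub_self hα (angularModulus_nonneg α x x)]
  have hK : 0 ≤ K := nonneg_of_abs_le_mul_min
    (rpow_pos_of_pos (norm_pos_iff.2 (sub_ne_zero.2 hxy)) α) (projModulus_pos hxy) (h x y)
  have htwo : (1 : ℝ) ≤ 2 ^ (α / 2) := one_le_rpow one_le_two (by positivity)
  calc |f x - f y| ≤ K * min (‖x - y‖ ^ α) (projModulus α x y) := h x y
    _ ≤ K * (2 ^ (α / 2) * min (‖x - y‖ ^ α) (angularModulus α x y)) := by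
        rw [mul_min_of_nonneg _ _ (zero_le_one.trans htwo)]
        exact mul_le_mul_of_nonneg_left (min_le_min (le_mul_of_one_le_left (by positivity) htwo)
          (projModulus_le_angularModulus hα.le hyx)) hK
    _ = 2 ^ (α / 2) * K * min (‖x - y‖ ^ α) (angularModulus α x y) := by ring

end Holder

theorem stmt_1_general (n : ℕ) (α : ℝ) (hα0 : 0 < α) :
    ∃ C > 0,
      (∀ (f : EuclideanSpace ℝ (Fin n) → ℝ) (K : ℝ),
        (∀ x y, |f x - f y| ≤ K * min (‖x - y‖ ^ α)
            ((‖x - y‖ / (1 + ‖x‖ + ‖y‖)) ^ (α / 2)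
              + ((‖x‖ + ‖y‖) * sinAngle x y) ^ α)) →
        (∀ x y, |f x - f y| ≤ (C * K) * min (‖x - y‖ ^ α)
            ((‖x - projPar x y‖ / (1 + ‖x‖)) ^ (α / 2)
              + ‖projOrth x y‖ ^ α))) ∧
      (∀ (f : EuclideanSpace ℝ (Fin n) → ℝ) (K' : ℝ),
        (∀ x y, |f x - f y| ≤ K' * min (‖x - y‖ ^ α)
            ((‖x - projPar x y‖ / (1 + ‖x‖)) ^ (α / 2)
              + ‖projOrth x y‖ ^ α)) →
        (∀ x y, |f x - f y| ≤ (C * K') * min (‖x - y‖ ^ α)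
            ((‖x - y‖ / (1 + ‖x‖ + ‖y‖)) ^ (α / 2)
              + ((‖x‖ + ‖y‖) * sinAngle x y) ^ α))) :=
  ⟨2 ^ (α / 2), by positivity, fun _ _ h => AngularHolder.projHolder hα0 h,
    fun _ _ h => ProjHolder.angularHolder hα0 h⟩

theorem stmt_1 (n : ℕ) (hn : 1 ≤ n) (α : ℝ) (hα0 : 0 < α) (hα1 : α < 1) :
    ∃ C > 0,
      (∀ (f : EuclideanSpace ℝ (Fin n) → ℝ) (K : ℝ),
        (∀ x y, |f x - f y| ≤ K * min (‖x - y‖ ^ α)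
            ((‖x - y‖ / (1 + ‖x‖ + ‖y‖)) ^ (α / 2)
              + ((‖x‖ + ‖y‖) * sinAngle x y) ^ α)) →
        (∀ x y, |f x - f y| ≤ (C * K) * min (‖x - y‖ ^ α)
            ((‖x - projPar x y‖ / (1 + ‖x‖)) ^ (α / 2)
              + ‖projOrth x y‖ ^ α))) ∧
      (∀ (f : EuclideanSpace ℝ (Fin n) → ℝ) (K' : ℝ),
        (∀ x y, |f x - f y| ≤ K' * min (‖x - y‖ ^ α)
            ((‖x - projPar x y‖ / (1 + ‖x‖)) ^ (α / 2)
              + ‖projOrth x y‖ ^ α)) →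
        (∀ x y, |f x - f y| ≤ (C * K') * min (‖x - y‖ ^ α)
            ((‖x - y‖ / (1 + ‖x‖ + ‖y‖)) ^ (α / 2)
              + ((‖x‖ + ‖y‖) * sinAngle x y) ^ α))) :=
  stmt_1_general n α hα0
end

section
/- Let a, T, A > 0, X ≥ 0, β > 1, and let c > 0 be given. Then there exist constants M > 0 and c' > 0, depending only on β and c, such that ∫_0^a σ^{-β} exp(-c T²/σ) exp(-c A²/σ) exp(-c σ X²) dσ ≤ M · (T²+A²)^{-(β-1)} · exp(-c' A T / a) · exp(-c' T X). -/
open Real MeasureTheory Set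

/-!
By AM–GM, for `0 < σ ≤ a` one has `(T² + A²)/(4σ) ≥ AT/(2a)` and `T²/(4σ) + σX² ≥ TX`, so half of
the decay `c(T² + A²)/σ` together with `cσX²` pays for the factors `exp(-cAT/(2a))` and
`exp(-cTX/2)`. What is left is bounded by the integral over all of `(0, ∞)` of
`σ^(-β) exp(-μ/σ)` with `μ = c(T² + A²)/2`, which the substitution `σ = 1/y` turns into the Gamma
integral `Γ(β - 1) μ^(1 - β)`.
-/

lemma abs_neg_one_mul_rpow_smul_comp_inv_eq {β μ x : ℝ} (hx : 0 < x) :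
    (|(-1 : ℝ)| * x ^ ((-1 : ℝ) - 1)) •
        ((x ^ (-1 : ℝ)) ^ (β - 2) * exp (-(μ * x ^ (-1 : ℝ))))
      = x ^ (-β) * exp (-(μ / x)) := by
  rw [abs_neg, abs_one, one_mul, smul_eq_mul, rpow_neg_one, inv_rpow hx.le, ← rpow_neg hx.le,
    ← mul_assoc, ← rpow_add hx, div_eq_mul_inv]
  ring_nf

lemma integrableOn_rpow_neg_mul_exp_neg_div {β μ : ℝ} (hβ : 1 < β) (hμ : 0 < μ) :
    IntegrableOn (fun x : ℝ => x ^ (-β) * exp (-(μ / x))) (Ioi 0) := by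
  have hGamma : IntegrableOn (fun y : ℝ => y ^ (β - 2) * exp (-(μ * y))) (Ioi 0) := by
    simpa only [rpow_one, neg_mul] using
      integrableOn_rpow_mul_exp_neg_mul_rpow (s := β - 2) (p := 1) (by linarith) one_pos hμ
  exact ((integrableOn_Ioi_comp_rpow_iff _ (by norm_num : (-1 : ℝ) ≠ 0)).2 hGamma).congr_fun
    (fun x hx => abs_neg_one_mul_rpow_smul_comp_inv_eq hx) measurableSet_Ioi

lemma integral_rpow_neg_mul_exp_neg_div {β μ : ℝ} (hβ : 1 < β) (hμ : 0 < μ) :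
    ∫ x in Ioi (0 : ℝ), x ^ (-β) * exp (-(μ / x)) = μ ^ (1 - β) * Gamma (β - 1) := by
  have hGamma := integral_rpow_mul_exp_neg_mul_Ioi (a := β - 1) (by linarith) hμ
  rw [show β - 1 - 1 = β - 2 by ring, one_div, inv_rpow hμ.le, ← rpow_neg hμ.le, neg_sub]
    at hGamma
  refine .trans ?_ ((integral_comp_rpow_Ioi _ (by norm_num : (-1 : ℝ) ≠ 0)).trans hGamma)
  exact setIntegral_congr_fun measurableSet_Ioi
    (fun x hx => (abs_neg_one_mul_rpow_smul_comp_inv_eq hx).symm)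

lemma setIntegral_le_setIntegral_mul_of_le_mul {α : Type*} [MeasurableSpace α] {μ : Measure α}
    {s t : Set α} {f g : α → ℝ} {K : ℝ} (hs : MeasurableSet s) (ht : MeasurableSet t)
    (hst : s ⊆ t) (hg : IntegrableOn g t μ) (hg0 : ∀ x ∈ t, 0 ≤ g x) (hK : 0 ≤ K)
    (hf0 : ∀ x ∈ s, 0 ≤ f x) (hfg : ∀ x ∈ s, f x ≤ g x * K) :
    ∫ x in s, f x ∂μ ≤ (∫ x in t, g x ∂μ) * K :=
  calc ∫ x in s, f x ∂μ ≤ ∫ x in s, g x * K ∂μ :=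
        integral_mono_of_nonneg (ae_restrict_of_forall_mem hs hf0)
          ((hg.mono_set hst).mul_const K) (ae_restrict_of_forall_mem hs hfg)
    _ = (∫ x in s, g x ∂μ) * K := integral_mul_const K g
    _ ≤ (∫ x in t, g x ∂μ) * K := mul_le_mul_of_nonneg_right
        (setIntegral_mono_set hg (ae_restrict_of_forall_mem ht hg0) hst.eventuallyLE) hK

lemma add_sq_div_add_mul_div_add_mul_le {σ a T A X : ℝ} (hσ : 0 < σ) (hσa : σ ≤ a)
    (hT : 0 ≤ T) (hA : 0 ≤ A) (hX : 0 ≤ X) :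
    (T ^ 2 + A ^ 2) / (2 * σ) + A * T / (2 * a) + T * X / 2 ≤ (T ^ 2 + A ^ 2) / σ + σ * X ^ 2 := by
  have hAT : A * T / (2 * a) ≤ (T ^ 2 + A ^ 2) / (4 * σ) :=
    calc A * T / (2 * a) ≤ A * T / (2 * σ) := by gcongr
      _ ≤ (T ^ 2 + A ^ 2) / (4 * σ) := by
        rw [div_le_div_iff₀ (by positivity) (by positivity)]
        nlinarith [sq_nonneg (T - A)]
  have hTX : T * X ≤ T ^ 2 / (4 * σ) + σ * X ^ 2 := by
    have hsq : 0 ≤ (T - 2 * σ * X) ^ 2 / (4 * σ) := by positivity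
    have hexpand : (T - 2 * σ * X) ^ 2 / (4 * σ) = T ^ 2 / (4 * σ) - T * X + σ * X ^ 2 := by
      field_simp; ring
    linarith
  have hA2 : 0 ≤ A ^ 2 / (4 * σ) := by positivity
  have hsplit : (T ^ 2 + A ^ 2) / σ + σ * X ^ 2 = (T ^ 2 + A ^ 2) / (2 * σ)
      + (T ^ 2 + A ^ 2) / (4 * σ) + (T ^ 2 / (4 * σ) + σ * X ^ 2) + A ^ 2 / (4 * σ) := by
    field_simp; ring
  nlinarith [mul_nonneg hT hX]

lemma rpow_neg_mul_exp_mul_exp_mul_exp_le {β c σ a T A X : ℝ} (hc : 0 ≤ c) (hσ : 0 < σ)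
    (hσa : σ ≤ a) (hT : 0 ≤ T) (hA : 0 ≤ A) (hX : 0 ≤ X) :
    σ ^ (-β) * exp (-c * T ^ 2 / σ) * exp (-c * A ^ 2 / σ) * exp (-c * σ * X ^ 2)
      ≤ σ ^ (-β) * exp (-(c / 2 * (T ^ 2 + A ^ 2) / σ))
          * (exp (-(c / 2) * A * T / a) * exp (-(c / 2) * T * X)) := by
  simp only [mul_assoc, ← exp_add]
  gcongr σ ^ (-β) * exp ?_
  linear_combination c * add_sq_div_add_mul_div_add_mul_le hσ hσa hT hA hX

theorem stmt_2 (β c : ℝ) (hβ : 1 < β) (hc : 0 < c) :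
    ∃ M > 0, ∃ c' > 0, ∀ a T A X : ℝ, 0 < a → 0 < T → 0 < A → 0 ≤ X →
      ∫ σ in Set.Ioo (0 : ℝ) a,
          σ ^ (-β) * Real.exp (-c * T ^ 2 / σ) * Real.exp (-c * A ^ 2 / σ)
            * Real.exp (-c * σ * X ^ 2)
        ≤ M * (T ^ 2 + A ^ 2) ^ (-(β - 1)) * Real.exp (-c' * A * T / a)
            * Real.exp (-c' * T * X) := by
  have hΓ : 0 < Gamma (β - 1) := Gamma_pos_of_pos (by linarith)
  refine ⟨(c / 2) ^ (1 - β) * Gamma (β - 1), by positivity, c / 2, by positivity, ?_⟩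
  intro a T A X _ hT hA hX
  have hμ : 0 < c / 2 * (T ^ 2 + A ^ 2) := by positivity
  calc _ ≤ (∫ σ in Ioi 0, σ ^ (-β) * exp (-(c / 2 * (T ^ 2 + A ^ 2) / σ)))
          * (exp (-(c / 2) * A * T / a) * exp (-(c / 2) * T * X)) :=
        setIntegral_le_setIntegral_mul_of_le_mul measurableSet_Ioo measurableSet_Ioi
          Ioo_subset_Ioi_self (integrableOn_rpow_neg_mul_exp_neg_div hβ hμ)
          (fun σ (hσ : 0 < σ) => by positivity) (by positivity)
          (fun σ hσ => by have := hσ.1; positivity)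
          (fun σ hσ => rpow_neg_mul_exp_mul_exp_mul_exp_le hc.le hσ.1 hσ.2.le hT.le hA.le hX)
    _ = _ := by
        rw [integral_rpow_neg_mul_exp_neg_div hβ hμ, mul_rpow (by positivity) (by positivity),
          neg_sub]
        ring
end

section
/- Fix c > 0 and n ≥ 1. For x = (x₁,0,…,0) with x₁ > 1, define for y = (y₁,y') ∈ R × R^{n-1} the kernel K₂(t,x,y) = (t/x₁)·(t² + |x₁-y₁|/x₁ + |y'|²)^{-(n+2)/2}·exp(-c(t²+|y'|²)x₁/(x₁-y₁)) restricted to x₁/2 ≤ y₁ < x₁. Then ∫_{R^n} K₂(t,x,y) dy ≤ C for all t > 0, with C depending only on n and c. -/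
/-!
Since the exponential factor is at most `1`, the kernel is dominated on the strip by
`(t / x₁) * (h y₁ + ‖y'‖²) ^ (-(n + 2) / 2)` with `h y₁ = t² + |x₁ - y₁| / x₁`. Rescaling `y'` by
`√(h y₁)` turns the `y'`-integral into `h y₁ ^ (-3/2)` times the finite constant
`∫ (1 + ‖z‖²) ^ (-(n + 2) / 2)`, and `(t / x₁) * h ^ (-3/2)` has the antiderivative
`2 t h ^ (-1/2)`, which takes values in `[0, 2]` on `y₁ ≤ x₁`.
-/

open Real MeasureTheory Set Module

section AddNormSq

variable {E : Type*} [NormedAddCommGroup E] [NormedSpace ℝ E]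

lemma add_norm_sq_sqrt_smul_rpow {a : ℝ} (ha : 0 < a) (p : ℝ) (z : E) :
    (a + ‖√a • z‖ ^ 2) ^ p = a ^ p * (1 + ‖z‖ ^ 2) ^ p := by
  rw [norm_smul, mul_pow, norm_of_nonneg (sqrt_nonneg a), sq_sqrt ha.le,
    ← mul_rpow ha.le (by positivity), mul_one_add]

variable [FiniteDimensional ℝ E] [MeasurableSpace E] [BorelSpace E]
  (ν : Measure E) [ν.IsAddHaarMeasure]

lemma integrable_add_norm_sq_rpow {a r : ℝ} (ha : 0 < a) (hr : (finrank ℝ E : ℝ) < r) :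
    Integrable (fun z : E => (a + ‖z‖ ^ 2) ^ (-r / 2)) ν := by
  rw [← integrable_comp_smul_iff ν _ (sqrt_pos.2 ha).ne']
  simp_rw [add_norm_sq_sqrt_smul_rpow ha]
  exact (integrable_rpow_neg_one_add_norm_sq hr).const_mul _

lemma integral_add_norm_sq_rpow {a : ℝ} (ha : 0 < a) (p : ℝ) :
    ∫ z, (a + ‖z‖ ^ 2) ^ p ∂ν = a ^ (p + finrank ℝ E / 2) * ∫ z, (1 + ‖z‖ ^ 2) ^ p ∂ν := by
  have key := ν.integral_comp_smul_of_nonneg (fun z => (a + ‖z‖ ^ 2) ^ p) √a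
    (hR := sqrt_nonneg a)
  simp_rw [add_norm_sq_sqrt_smul_rpow ha, integral_const_mul, smul_eq_mul] at key
  have hsqrt : √a ^ finrank ℝ E = a ^ ((finrank ℝ E : ℝ) / 2) := by
    rw [sqrt_eq_rpow, ← rpow_natCast, ← rpow_mul ha.le]; ring_nf
  rw [hsqrt, eq_inv_mul_iff_mul_eq₀ (by positivity)] at key
  rw [← key, rpow_add ha]; ring

variable {α : Type*} [MeasurableSpace α] (μ : Measure α) {h : α → ℝ} {r : ℝ}

lemma integrable_prod_add_norm_sq_rpow (hmeas : Measurable h) (hpos : ∀ x, 0 < h x)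
    (hr : (finrank ℝ E : ℝ) < r) (hint : Integrable (fun x => h x ^ ((finrank ℝ E - r) / 2)) μ) :
    Integrable (fun y : α × E => (h y.1 + ‖y.2‖ ^ 2) ^ (-r / 2)) (μ.prod ν) := by
  have hslice (x : α) : ∫ z, ‖(h x + ‖z‖ ^ 2) ^ (-r / 2)‖ ∂ν
      = h x ^ ((finrank ℝ E - r) / 2) * ∫ z, (1 + ‖z‖ ^ 2) ^ (-r / 2) ∂ν := by
    have := hpos x
    rw [integral_congr_ae (ae_of_all _ fun z => norm_of_nonneg (rpow_nonneg (by positivity) _)),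
      integral_add_norm_sq_rpow ν this]
    ring_nf
  refine (integrable_prod_iff (by fun_prop : Measurable _).aestronglyMeasurable).2
    ⟨ae_of_all _ fun x => integrable_add_norm_sq_rpow ν (hpos x) hr, ?_⟩
  simp_rw [hslice]
  exact hint.mul_const _

lemma integral_prod_add_norm_sq_rpow [SFinite μ] (hmeas : Measurable h) (hpos : ∀ x, 0 < h x)
    (hr : (finrank ℝ E : ℝ) < r) (hint : Integrable (fun x => h x ^ ((finrank ℝ E - r) / 2)) μ) :
    ∫ y, (h y.1 + ‖y.2‖ ^ 2) ^ (-r / 2) ∂(μ.prod ν)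
      = (∫ x, h x ^ ((finrank ℝ E - r) / 2) ∂μ) * ∫ z, (1 + ‖z‖ ^ 2) ^ (-r / 2) ∂ν := by
  rw [integral_prod _ (integrable_prod_add_norm_sq_rpow ν μ hmeas hpos hr hint)]
  have hexp : -r / 2 + (finrank ℝ E : ℝ) / 2 = (finrank ℝ E - r) / 2 := by ring
  simp_rw [integral_add_norm_sq_rpow ν (hpos _), hexp, integral_mul_const]

end AddNormSq

lemma integral_div_mul_add_sub_div_rpow {x t lo : ℝ} (hx : 0 < x) (ht : 0 < t) (hlo : lo ≤ x) :
    ∫ y in lo..x, t / x * (t ^ 2 + (x - y) / x) ^ (-(3 : ℝ) / 2)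
      = 2 - 2 * t * (t ^ 2 + (x - lo) / x) ^ (-(1 : ℝ) / 2) := by
  have hpos : ∀ y ∈ uIcc lo x, 0 < t ^ 2 + (x - y) / x := fun y hy => by
    have : y ≤ x := (uIcc_of_le hlo ▸ hy).2
    have : 0 ≤ (x - y) / x := div_nonneg (by linarith) hx.le
    positivity
  have hderiv : ∀ y ∈ uIcc lo x, HasDerivAt (fun y => 2 * t * (t ^ 2 + (x - y) / x) ^ (-(1 : ℝ) / 2))
      (t / x * (t ^ 2 + (x - y) / x) ^ (-(3 : ℝ) / 2)) y := fun y hy => by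
    have hin := (((hasDerivAt_id' y).const_sub x).div_const x).const_add (t ^ 2)
    refine ((hin.rpow_const (p := -(1 : ℝ) / 2) (Or.inl (hpos y hy).ne')).const_mul
      (2 * t)).congr_deriv ?_
    rw [show -(1 : ℝ) / 2 - 1 = -(3 : ℝ) / 2 by norm_num]
    ring
  have hcont : ContinuousOn (fun y => t / x * (t ^ 2 + (x - y) / x) ^ (-(3 : ℝ) / 2)) (uIcc lo x) :=
    continuousOn_const.mul <|
      (by fun_prop : Continuous fun y => t ^ 2 + (x - y) / x).continuousOn.rpow_const
        fun y hy => Or.inl (hpos y hy).ne'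
  rw [intervalIntegral.integral_eq_sub_of_hasDerivAt hderiv hcont.intervalIntegrable]
  have hend : (t ^ 2) ^ (-(1 : ℝ) / 2) = t⁻¹ := by
    rw [← rpow_natCast, ← rpow_mul ht.le]; norm_num [rpow_neg_one]
  simp only [sub_self, zero_div, add_zero, hend, mul_assoc, mul_inv_cancel₀ ht.ne', mul_one]

lemma setIntegral_Ico_div_mul_add_abs_sub_div_rpow_le {x t lo : ℝ} (hx : 0 < x) (ht : 0 < t)
    (hlo : lo ≤ x) :
    ∫ y in Ico lo x, t / x * (t ^ 2 + |x - y| / x) ^ (-(3 : ℝ) / 2) ≤ 2 := by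
  rw [integral_Ico_eq_integral_Ioo, ← integral_Ioc_eq_integral_Ioo,
    ← intervalIntegral.integral_of_le hlo]
  rw [intervalIntegral.integral_congr (g := fun y => t / x * (t ^ 2 + (x - y) / x) ^ (-(3 : ℝ) / 2))
    fun y hy => by rw [abs_of_nonneg (sub_nonneg.2 (uIcc_of_le hlo ▸ hy).2)],
    integral_div_mul_add_sub_div_rpow hx ht hlo]
  have : 0 ≤ (x - lo) / x := div_nonneg (by linarith) hx.le
  have : 0 ≤ 2 * t * (t ^ 2 + (x - lo) / x) ^ (-(1 : ℝ) / 2) := by positivity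
  linarith

lemma integral_le_setIntegral_of_le {α : Type*} [MeasurableSpace α] {μ : Measure α} {s : Set α}
    (hs : MeasurableSet s) {f g : α → ℝ} (hf : ∀ x, 0 ≤ f x) (hf_zero : ∀ x ∉ s, f x = 0)
    (hfg : ∀ x ∈ s, f x ≤ g x) (hg : IntegrableOn g s μ) :
    ∫ x, f x ∂μ ≤ ∫ x in s, g x ∂μ := by
  rw [← setIntegral_eq_integral_of_forall_compl_eq_zero hf_zero]
  exact integral_mono_of_nonneg (ae_of_all _ hf) hg (ae_restrict_of_forall_mem hs hfg)

section Strip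

variable {E : Type*} [NormedAddCommGroup E] [NormedSpace ℝ E] [FiniteDimensional ℝ E]
  [MeasurableSpace E] [BorelSpace E] (ν : Measure E) [ν.IsAddHaarMeasure] {x t lo : ℝ}

lemma integrable_rpow_add_abs_sub_div_restrict_Ico (hx : 0 < x) (ht : 0 < t) (p : ℝ) :
    Integrable (fun y => (t ^ 2 + |x - y| / x) ^ p) (volume.restrict (Ico lo x)) :=
  ((by fun_prop : Continuous fun y => t ^ 2 + |x - y| / x).rpow_const fun _ =>
    Or.inl (by positivity)).integrableOn_Icc.mono_set Ico_subset_Icc_self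

lemma integrable_strip (hx : 0 < x) (ht : 0 < t) :
    Integrable (fun y : ℝ × E => t / x * (t ^ 2 + |x - y.1| / x + ‖y.2‖ ^ 2) ^
      (-((finrank ℝ E : ℝ) + 3) / 2)) ((volume.restrict (Ico lo x)).prod ν) :=
  (integrable_prod_add_norm_sq_rpow ν _ (by fun_prop) (fun _ => by positivity) (by linarith)
    (integrable_rpow_add_abs_sub_div_restrict_Ico hx ht _)).const_mul _

lemma integral_strip_le (hx : 0 < x) (ht : 0 < t) (hlo : lo ≤ x) :
    ∫ y, t / x * (t ^ 2 + |x - y.1| / x + ‖y.2‖ ^ 2) ^ (-((finrank ℝ E : ℝ) + 3) / 2)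
        ∂((volume.restrict (Ico lo x)).prod ν)
      ≤ 2 * ∫ z, (1 + ‖z‖ ^ 2) ^ (-((finrank ℝ E : ℝ) + 3) / 2) ∂ν := by
  have hexp : ((finrank ℝ E : ℝ) - (finrank ℝ E + 3)) / 2 = -3 / 2 := by ring
  have h1D := setIntegral_Ico_div_mul_add_abs_sub_div_rpow_le hx ht hlo
  rw [integral_const_mul] at h1D
  rw [integral_const_mul, integral_prod_add_norm_sq_rpow ν _ (by fun_prop)
    (fun _ => by positivity) (by linarith) (integrable_rpow_add_abs_sub_div_restrict_Ico hx ht _),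
    hexp, ← mul_assoc]
  exact mul_le_mul_of_nonneg_right h1D (integral_nonneg fun _ => by positivity)

end Strip

/-- with `n = m + 1 ≥ 1` and `y = (y₁, y') ∈ ℝ × ℝ^{n-1}`. -/
theorem stmt_5 (m : ℕ) (c : ℝ) (hc : 0 < c) :
    ∃ C > 0, ∀ x₁ : ℝ, 1 < x₁ → ∀ t : ℝ, 0 < t →
      ∫ y : ℝ × EuclideanSpace ℝ (Fin m),
          (if x₁ / 2 ≤ y.1 ∧ y.1 < x₁ then
            (t / x₁) * (t ^ 2 + |x₁ - y.1| / x₁ + ‖y.2‖ ^ 2) ^ (-((m : ℝ) + 3) / 2)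
              * Real.exp (-c * (t ^ 2 + ‖y.2‖ ^ 2) * x₁ / (x₁ - y.1))
          else 0)
        ≤ C := by
  set I := ∫ z : EuclideanSpace ℝ (Fin m), (1 + ‖z‖ ^ 2) ^ (-((m : ℝ) + 3) / 2)
  have hI : 0 ≤ I := integral_nonneg fun _ => by positivity
  refine ⟨2 * I + 1, by positivity, fun x₁ hx₁ t ht => ?_⟩
  have hx : 0 < x₁ := by linarith
  have hS : (volume.restrict (Ico (x₁ / 2) x₁)).prod volume
      = volume.restrict (Ico (x₁ / 2) x₁ ×ˢ (univ : Set (EuclideanSpace ℝ (Fin m)))) := by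
    rw [Measure.volume_eq_prod, ← Measure.prod_restrict, Measure.restrict_univ]
  have hd : (finrank ℝ (EuclideanSpace ℝ (Fin m)) : ℝ) = m := by simp
  have hint := integrable_strip (volume : Measure (EuclideanSpace ℝ (Fin m))) hx ht
    (lo := x₁ / 2)
  have hbound := integral_strip_le (volume : Measure (EuclideanSpace ℝ (Fin m))) hx ht
    (by linarith : x₁ / 2 ≤ x₁)
  rw [hd, hS] at hint hbound
  have hexp (y : ℝ × EuclideanSpace ℝ (Fin m)) (hy : y.1 < x₁) :
      -c * (t ^ 2 + ‖y.2‖ ^ 2) * x₁ / (x₁ - y.1) ≤ 0 := by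
    have : 0 ≤ c * (t ^ 2 + ‖y.2‖ ^ 2) * x₁ := by positivity
    exact div_nonpos_of_nonpos_of_nonneg (by linarith) (by linarith)
  refine (integral_le_setIntegral_of_le (measurableSet_Ico.prod MeasurableSet.univ)
    (fun y => by split_ifs <;> positivity) (fun y hy => if_neg (by simpa using hy))
    (fun y hy => ?_) hint).trans (by linarith)
  rw [if_pos (by simpa using hy)]
  exact mul_le_of_le_one_right (by positivity) (exp_le_one_iff.2 (hexp y hy.1.2))
end

section
/- Fix c > 0 and n ≥ 1. For x = (x₁,0,…,0) with x₁ > 0 and y = (y₁,y') ∈ R × R^{n-1}, define K₄(t,x,y) = (t/y₁)·(log(x₁/y₁))^{-3/2}·exp(-c t²/log(x₁/y₁))·exp(-c|y'|²) for 1 < y₁ < x₁/2, and K₄ = 0 otherwise. Then ∫_{R^n} K₄(t,x,y) dy ≤ C·min{1, t} for all t > 0 and all such x, with C depending only on n and c. -/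
/-!
Write `L = log (x₁ / y₁)` and `z = c t²`. Since `(1 + u)² ≤ 2 eᵘ` for `u ≥ 0`, the factor
`L^(-3/2) exp (-z / L)` is at most `2 (L + z)^(-3/2)`, and `(L + z)^(-3/2) / y₁` is the
`y₁`-derivative of `2 (L + z)^(-1/2)`. So the `y₁`-integral is at most
`4 t (log 2 + c t²)^(-1/2) ≤ 4 (log 2 ^ (-1/2) + c ^ (-1/2)) min 1 t`, and the integral in
`y'` is the Gaussian integral `(π / c)^((n - 1) / 2)`.
-/

open Real MeasureTheory

lemma one_add_sq_le_two_mul_exp {u : ℝ} (hu : 0 ≤ u) : (1 + u) ^ 2 ≤ 2 * exp u := by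
  nlinarith [quadratic_le_exp_of_nonneg hu]

lemma rpow_neg_mul_exp_neg_div_le {L z p : ℝ} (hL : 0 < L) (hz : 0 ≤ z) (hp : p ≤ 2) :
    L ^ (-p) * exp (-(z / L)) ≤ 2 * (L + z) ^ (-p) := by
  have hu : 0 ≤ z / L := by positivity
  have hsplit : (L + z) ^ p = L ^ p * (1 + z / L) ^ p := by
    rw [← mul_rpow hL.le (by positivity)]
    congr 1
    field_simp
  have hpow : (1 + z / L) ^ p ≤ 2 * exp (z / L) :=
    calc (1 + z / L) ^ p ≤ (1 + z / L) ^ (2 : ℝ) := rpow_le_rpow_of_exponent_le (by linarith) hp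
      _ ≤ 2 * exp (z / L) := by rw [rpow_two]; exact one_add_sq_le_two_mul_exp hu
  rw [rpow_neg hL.le, rpow_neg (by linarith), exp_neg, ← mul_inv, ← div_eq_mul_inv 2,
    inv_le_comm₀ (by positivity) (by positivity), inv_div, div_le_iff₀ two_pos]
  calc (L + z) ^ p = L ^ p * (1 + z / L) ^ p := hsplit
    _ ≤ L ^ p * (2 * exp (z / L)) := by gcongr
    _ = L ^ p * exp (z / L) * 2 := by ring

lemma rpow_mul_add_mul_sq_le_mul_min {a c t : ℝ} (ha : 0 < a) (hc : 0 < c) (ht : 0 < t) :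
    t * (a + c * t ^ 2) ^ (-(1 / 2 : ℝ))
      ≤ (a ^ (-(1 / 2 : ℝ)) + c ^ (-(1 / 2 : ℝ))) * min 1 t := by
  have ha' : 0 < a ^ (-(1 / 2 : ℝ)) := rpow_pos_of_pos ha _
  have hc' : 0 < c ^ (-(1 / 2 : ℝ)) := rpow_pos_of_pos hc _
  rcases le_total t 1 with ht1 | ht1
  · have : (a + c * t ^ 2) ^ (-(1 / 2 : ℝ)) ≤ a ^ (-(1 / 2 : ℝ)) :=
      rpow_le_rpow_of_nonpos ha (by nlinarith) (by norm_num)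
    rw [min_eq_right ht1]
    nlinarith
  · have hsq : (c * t ^ 2) ^ (-(1 / 2 : ℝ)) = c ^ (-(1 / 2 : ℝ)) * t⁻¹ := by
      rw [mul_rpow hc.le (sq_nonneg t), rpow_neg (sq_nonneg t), ← sqrt_eq_rpow, sqrt_sq ht.le]
    have : (a + c * t ^ 2) ^ (-(1 / 2 : ℝ)) ≤ c ^ (-(1 / 2 : ℝ)) * t⁻¹ :=
      hsq ▸ rpow_le_rpow_of_nonpos (by positivity) (by linarith) (by norm_num)
    rw [min_eq_left ht1]
    calc t * (a + c * t ^ 2) ^ (-(1 / 2 : ℝ)) ≤ t * (c ^ (-(1 / 2 : ℝ)) * t⁻¹) := by gcongr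
      _ = c ^ (-(1 / 2 : ℝ)) := by field_simp
      _ ≤ (a ^ (-(1 / 2 : ℝ)) + c ^ (-(1 / 2 : ℝ))) * 1 := by linarith

lemma log_div_add_pos_of_le {x z a b : ℝ} (hx : 0 < x) (ha : 0 < a) (hab : a ≤ b)
    (hb : 0 < log (x / b) + z) : 0 < log (x / a) + z := by
  refine hb.trans_le (add_le_add_left ?_ z)
  exact log_le_log (div_pos hx (ha.trans_le hab)) (div_le_div_of_nonneg_left hx.le ha hab)

lemma hasDerivAt_log_div_add_rpow {x z q a : ℝ} (hx : 0 < x) (ha : 0 < a)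
    (hpos : 0 < log (x / a) + z) :
    HasDerivAt (fun a => (log (x / a) + z) ^ q) (-q * a⁻¹ * (log (x / a) + z) ^ (q - 1)) a := by
  have hdiv : HasDerivAt (fun a => x / a) (-x / a ^ 2) a := by
    simpa [div_eq_mul_inv, neg_div] using (hasDerivAt_inv ha.ne').const_mul x
  have hlog : HasDerivAt (fun a => log (x / a) + z) (-a⁻¹) a :=
    ((hdiv.log (by positivity)).add_const z).congr_deriv (by field_simp)
  exact (hlog.rpow_const (Or.inl hpos.ne')).congr_deriv (by ring)

lemma continuousOn_inv_mul_log_div_add_rpow {x z q a₀ b : ℝ} (hx : 0 < x) (ha₀ : 0 < a₀)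
    (hb : 0 < log (x / b) + z) :
    ContinuousOn (fun a => a⁻¹ * (log (x / a) + z) ^ q) (Set.Icc a₀ b) := by
  have hpos : ∀ a ∈ Set.Icc a₀ b, 0 < a := fun a ha => ha₀.trans_le ha.1
  refine (continuousOn_inv₀.mono fun a ha => (hpos a ha).ne').mul (ContinuousOn.rpow_const ?_
    fun a ha => Or.inl (log_div_add_pos_of_le hx (hpos a ha) ha.2 hb).ne')
  refine ContinuousOn.add (ContinuousOn.log ?_ fun a ha => (div_pos hx (hpos a ha)).ne')
    continuousOn_const
  exact continuousOn_const.div continuousOn_id fun a ha => (hpos a ha).ne'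

theorem integral_inv_mul_log_div_add_rpow {x z p a₀ b : ℝ} (hx : 0 < x) (ha₀ : 0 < a₀)
    (hab : a₀ ≤ b) (hb : 0 < log (x / b) + z) (hp : p ≠ 1) :
    ∫ a in a₀..b, a⁻¹ * (log (x / a) + z) ^ (-p) =
      ((log (x / b) + z) ^ (1 - p) - (log (x / a₀) + z) ^ (1 - p)) / (p - 1) := by
  rw [sub_div]
  refine intervalIntegral.integral_eq_sub_of_hasDerivAt
    (f := fun a => (log (x / a) + z) ^ (1 - p) / (p - 1)) (fun a ha => ?_) ?_
  · rw [Set.uIcc_of_le hab] at ha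
    have ha0 : 0 < a := ha₀.trans_le ha.1
    refine ((hasDerivAt_log_div_add_rpow hx ha0
      (log_div_add_pos_of_le hx ha0 ha.2 hb)).div_const (p - 1)).congr_deriv ?_
    rw [sub_sub_cancel_left]
    field_simp [sub_ne_zero.mpr hp]
    ring
  · exact (continuousOn_inv_mul_log_div_add_rpow hx ha₀ hb).intervalIntegrable_of_Icc hab

lemma div_mul_rpow_mul_exp_le {a t c L : ℝ} (ha : 0 < a) (ht : 0 ≤ t) (hc : 0 ≤ c) (hL : 0 < L) :
    t / a * L ^ (-(3 : ℝ) / 2) * exp (-c * t ^ 2 / L)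
      ≤ 2 * t * (a⁻¹ * (L + c * t ^ 2) ^ (-(3 / 2 : ℝ))) := by
  have key := rpow_neg_mul_exp_neg_div_le (p := 3 / 2) hL (by positivity : 0 ≤ c * t ^ 2)
    (by norm_num)
  rw [neg_div, neg_mul, neg_div]
  calc t / a * L ^ (-(3 / 2 : ℝ)) * exp (-(c * t ^ 2 / L))
      = t / a * (L ^ (-(3 / 2 : ℝ)) * exp (-(c * t ^ 2 / L))) := by ring
    _ ≤ t / a * (2 * (L + c * t ^ 2) ^ (-(3 / 2 : ℝ))) := by gcongr
    _ = 2 * t * (a⁻¹ * (L + c * t ^ 2) ^ (-(3 / 2 : ℝ))) := by ring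

theorem setIntegral_div_mul_rpow_mul_exp_le {x c t : ℝ} (hc : 0 < c) (ht : 0 < t) :
    ∫ a in Set.Ioo 1 (x / 2), t / a * log (x / a) ^ (-(3 : ℝ) / 2)
        * exp (-c * t ^ 2 / log (x / a))
      ≤ 4 * t * (log 2 + c * t ^ 2) ^ (-(1 / 2 : ℝ)) := by
  set z := c * t ^ 2
  have hz : 0 < z := by positivity
  have hbound : 0 ≤ 4 * t * (log 2 + z) ^ (-(1 / 2 : ℝ)) := by positivity
  rcases le_or_gt (x / 2) 1 with hx2 | hx2
  · rwa [Set.Ioo_eq_empty hx2.not_gt, setIntegral_empty]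
  have hx : 0 < x := by linarith
  have hb : 0 < log (x / (x / 2)) + z := by
    rw [div_div_cancel₀ hx.ne']
    exact add_pos (log_pos one_lt_two) hz
  have hint : IntegrableOn (fun a => a⁻¹ * (log (x / a) + z) ^ (-(3 / 2 : ℝ)))
      (Set.Ioo 1 (x / 2)) :=
    (continuousOn_inv_mul_log_div_add_rpow hx one_pos hb).integrableOn_Icc.mono_set
      Set.Ioo_subset_Icc_self
  have hlogx : 0 ≤ (log (x / 1) + z) ^ (-(1 / 2 : ℝ)) :=
    rpow_nonneg (log_div_add_pos_of_le hx one_pos hx2.le hb).le _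
  have hpos : ∀ a ∈ Set.Ioo 1 (x / 2), 0 < a ∧ 0 < log (x / a) := fun a ⟨ha1, ha2⟩ =>
    ⟨by linarith, log_pos ((one_lt_div (by linarith)).mpr (by linarith))⟩
  calc _ ≤ ∫ a in Set.Ioo 1 (x / 2), 2 * t * (a⁻¹ * (log (x / a) + z) ^ (-(3 / 2 : ℝ))) := by
        refine integral_mono_of_nonneg ?_ (hint.const_mul (2 * t)) ?_ <;>
          filter_upwards [ae_restrict_mem measurableSet_Ioo] with a ha
        · obtain ⟨ha0, hL⟩ := hpos a ha
          positivity
        · exact div_mul_rpow_mul_exp_le (hpos a ha).1 ht.le hc.le (hpos a ha).2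
    _ = 2 * t * ∫ a in (1 : ℝ)..x / 2, a⁻¹ * (log (x / a) + z) ^ (-(3 / 2 : ℝ)) := by
        rw [integral_const_mul, intervalIntegral.integral_of_le hx2.le,
          integral_Ioc_eq_integral_Ioo]
    _ = 4 * t * ((log 2 + z) ^ (-(1 / 2 : ℝ)) - (log (x / 1) + z) ^ (-(1 / 2 : ℝ))) := by
        rw [integral_inv_mul_log_div_add_rpow hx one_pos hx2.le hb (by norm_num),
          div_div_cancel₀ hx.ne']
        norm_num
        ring
    _ ≤ 4 * t * (log 2 + z) ^ (-(1 / 2 : ℝ)) := by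
        gcongr
        linarith

/-- with `n = m + 1 ≥ 1` and `y = (y₁, y') ∈ ℝ × ℝ^{n-1}`. -/
theorem stmt_6 (m : ℕ) (c : ℝ) (hc : 0 < c) :
    ∃ C > 0, ∀ x₁ : ℝ, 0 < x₁ → ∀ t : ℝ, 0 < t →
      ∫ y : ℝ × EuclideanSpace ℝ (Fin m),
          (if 1 < y.1 ∧ y.1 < x₁ / 2 then
            (t / y.1) * (Real.log (x₁ / y.1)) ^ (-(3 : ℝ) / 2)
              * Real.exp (-c * t ^ 2 / Real.log (x₁ / y.1))
              * Real.exp (-c * ‖y.2‖ ^ 2)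
          else 0)
        ≤ C * min 1 t := by
  have hlog2 : 0 < log 2 := log_pos one_lt_two
  refine ⟨4 * (log 2 ^ (-(1 / 2 : ℝ)) + c ^ (-(1 / 2 : ℝ))) * (π / c) ^ (m / 2 : ℝ),
    by positivity, fun x₁ _ t ht => ?_⟩
  have hgauss : ∫ v : EuclideanSpace ℝ (Fin m), exp (-c * ‖v‖ ^ 2) = (π / c) ^ (m / 2 : ℝ) := by
    rw [GaussianFourier.integral_rexp_neg_mul_sq_norm hc]
    simp
  calc _ = (∫ a in Set.Ioo 1 (x₁ / 2), t / a * log (x₁ / a) ^ (-(3 : ℝ) / 2)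
          * exp (-c * t ^ 2 / log (x₁ / a))) * (π / c) ^ (m / 2 : ℝ) := by
        rw [← hgauss, ← integral_indicator measurableSet_Ioo, ← integral_prod_mul,
          Measure.volume_eq_prod]
        congr with y
        simp only [Set.indicator_apply, Set.mem_Ioo, ite_mul, zero_mul]
    _ ≤ 4 * t * (log 2 + c * t ^ 2) ^ (-(1 / 2 : ℝ)) * (π / c) ^ (m / 2 : ℝ) := by
        gcongr
        exact setIntegral_div_mul_rpow_mul_exp_le hc ht
    _ = t * (log 2 + c * t ^ 2) ^ (-(1 / 2 : ℝ)) * (4 * (π / c) ^ (m / 2 : ℝ)) := by ring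
    _ ≤ (log 2 ^ (-(1 / 2 : ℝ)) + c ^ (-(1 / 2 : ℝ))) * min 1 t * (4 * (π / c) ^ (m / 2 : ℝ)) :=
        mul_le_mul_of_nonneg_right (rpow_mul_add_mul_sq_le_mul_min hlog2 hc ht) (by positivity)
    _ = _ := by ring
end

section
/- For every c > 0 there is C > 0 such that ∫_{log 2}^∞ t·τ^{-3/2}·exp(-c t²/τ) dτ ≤ C·min{1, t} for all t > 0. -/
open Real MeasureTheory Set

lemma log2_pos' : (0:ℝ) < Real.log 2 := Real.log_pos one_lt_two
lemma log2_lt_one' : Real.log 2 < 1 := by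
  have := Real.log_lt_sub_one_of_pos (x := 2) two_pos (by norm_num)
  linarith

lemma f_meas' (c t : ℝ) :
    Measurable (fun τ : ℝ => t * τ ^ (-(3:ℝ)/2) * Real.exp (-c * t ^ 2 / τ)) := by
  fun_prop

lemma f_le_pow' (c t : ℝ) (ht : 0 < t) (hc : 0 < c) {τ : ℝ} (hτ : 0 < τ) :
    t * τ ^ (-(3:ℝ)/2) * Real.exp (-c * t ^ 2 / τ) ≤ t * τ ^ (-(3:ℝ)/2) := by
  have h1 : Real.exp (-c * t ^ 2 / τ) ≤ 1 := by
    apply Real.exp_le_one_iff.2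
    have h0 : 0 ≤ c * t ^ 2 / τ := by positivity
    have : -c * t ^ 2 / τ = -(c * t ^ 2 / τ) := by ring
    linarith [this.le, this.ge]
  have h0 : 0 ≤ t * τ ^ (-(3:ℝ)/2) := by positivity
  calc t * τ ^ (-(3:ℝ)/2) * Real.exp (-c * t ^ 2 / τ)
      ≤ t * τ ^ (-(3:ℝ)/2) * 1 := mul_le_mul_of_nonneg_left h1 h0
    _ = t * τ ^ (-(3:ℝ)/2) := mul_one _

lemma f_integrable' (c t : ℝ) (ht : 0 < t) (hc : 0 < c) {a : ℝ} (ha : 0 < a) :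
    IntegrableOn (fun τ : ℝ => t * τ ^ (-(3:ℝ)/2) * Real.exp (-c * t ^ 2 / τ)) (Ioi a) := by
  have hg : IntegrableOn (fun τ : ℝ => t * τ ^ (-(3:ℝ)/2)) (Ioi a) :=
    (integrableOn_Ioi_rpow_of_lt (by norm_num) ha).const_mul t
  refine hg.mono' ((f_meas' c t).aestronglyMeasurable) ?_
  filter_upwards [ae_restrict_mem measurableSet_Ioi] with τ hτ
  have hτ0 : 0 < τ := ha.trans hτ
  have hb := f_le_pow' c t ht hc hτ0
  have h0 : 0 ≤ t * τ ^ (-(3:ℝ)/2) * Real.exp (-c * t ^ 2 / τ) := by positivity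
  rw [Real.norm_eq_abs, abs_of_nonneg h0]
  exact hb

lemma bound_linear' (c t : ℝ) (ht : 0 < t) (hc : 0 < c) {a : ℝ} (ha : 0 < a) :
    ∫ τ in Ioi a, t * τ ^ (-(3:ℝ)/2) * Real.exp (-c * t ^ 2 / τ)
      ≤ t * (2 * a ^ (-(1:ℝ)/2)) := by
  have hg : IntegrableOn (fun τ : ℝ => t * τ ^ (-(3:ℝ)/2)) (Ioi a) :=
    (integrableOn_Ioi_rpow_of_lt (by norm_num) ha).const_mul t
  have h1 : ∫ τ in Ioi a, t * τ ^ (-(3:ℝ)/2) * Real.exp (-c * t ^ 2 / τ)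
      ≤ ∫ τ in Ioi a, t * τ ^ (-(3:ℝ)/2) := by
    refine setIntegral_mono_on (f_integrable' c t ht hc ha) hg measurableSet_Ioi ?_
    intro τ hτ
    exact f_le_pow' c t ht hc (ha.trans hτ)
  have h2 : ∫ τ in Ioi a, t * τ ^ (-(3:ℝ)/2) = t * (2 * a ^ (-(1:ℝ)/2)) := by
    rw [integral_const_mul, integral_Ioi_rpow_of_lt (by norm_num) ha]
    have : (-(3:ℝ)/2 + 1) = (-(1:ℝ)/2) := by norm_num
    rw [this]
    ring
  linarith [h1, h2.le]

theorem stmt_7 (c : ℝ) (hc : 0 < c) :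
    ∃ C > 0, ∀ t : ℝ, 0 < t →
      ∫ τ in Set.Ioi (Real.log 2),
          t * τ ^ (-(3 : ℝ) / 2) * Real.exp (-c * t ^ 2 / τ)
        ≤ C * min 1 t := by
  have h2 : (0:ℝ) < Real.log 2 := log2_pos'
  refine ⟨2 * Real.log 2 ^ (-(1:ℝ)/2) + 2/c + 2, by positivity, ?_⟩
  intro t ht
  rcases le_total t 1 with h1 | h1
  · rw [min_eq_right h1]
    have hb := bound_linear' c t ht hc h2
    have h2c : (0:ℝ) < 2/c := by positivity
    nlinarith [hb]
  · rw [min_eq_left h1]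
    have ht2 : (1:ℝ) ≤ t^2 := by nlinarith
    have hlt : Real.log 2 ≤ t^2 := le_trans log2_lt_one'.le ht2
    have ht2pos : (0:ℝ) < t^2 := by positivity
    have hsplit : ∫ τ in Ioi (Real.log 2), t * τ ^ (-(3:ℝ)/2) * Real.exp (-c * t ^ 2 / τ)
        = (∫ τ in Ioc (Real.log 2) (t^2), t * τ ^ (-(3:ℝ)/2) * Real.exp (-c * t ^ 2 / τ))
          + ∫ τ in Ioi (t^2), t * τ ^ (-(3:ℝ)/2) * Real.exp (-c * t ^ 2 / τ) := by
      rw [← setIntegral_union (Set.Ioc_disjoint_Ioi le_rfl) measurableSet_Ioi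
        ((f_integrable' c t ht hc h2).mono Set.Ioc_subset_Ioi_self le_rfl)
        (f_integrable' c t ht hc ht2pos), Set.Ioc_union_Ioi_eq_Ioi hlt]
    rw [hsplit]
    have hp2 : ∫ τ in Ioi (t^2), t * τ ^ (-(3:ℝ)/2) * Real.exp (-c * t ^ 2 / τ) ≤ 2 := by
      have hb := bound_linear' c t ht hc ht2pos
      have he : (t^2 : ℝ) ^ (-(1:ℝ)/2) = t⁻¹ := by
        rw [← Real.rpow_natCast t 2, ← Real.rpow_mul ht.le]
        norm_num [Real.rpow_neg_one]
      rw [he] at hb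
      calc ∫ τ in Ioi (t^2), t * τ ^ (-(3:ℝ)/2) * Real.exp (-c * t ^ 2 / τ)
          ≤ t * (2 * t⁻¹) := hb
        _ = 2 := by field_simp
    have hp1 : ∫ τ in Ioc (Real.log 2) (t^2), t * τ ^ (-(3:ℝ)/2) * Real.exp (-c * t ^ 2 / τ)
        ≤ 2/c := by
      have hgint : IntegrableOn (fun τ : ℝ => (c*t)⁻¹ * τ ^ (-(1:ℝ)/2))
          (Ioc (Real.log 2) (t^2)) := by
        have hii : IntervalIntegrable (fun τ : ℝ => τ ^ (-(1:ℝ)/2)) volume (Real.log 2) (t^2) :=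
          intervalIntegral.intervalIntegrable_rpow' (by norm_num)
        exact hii.1.const_mul _
      have hmono : ∫ τ in Ioc (Real.log 2) (t^2), t * τ ^ (-(3:ℝ)/2) * Real.exp (-c * t ^ 2 / τ)
          ≤ ∫ τ in Ioc (Real.log 2) (t^2), (c*t)⁻¹ * τ ^ (-(1:ℝ)/2) := by
        refine setIntegral_mono_on
          ((f_integrable' c t ht hc h2).mono Set.Ioc_subset_Ioi_self le_rfl) hgint
          measurableSet_Ioc ?_
        intro τ hτ
        have hτ0 : 0 < τ := h2.trans hτ.1
        have hx : 0 < c * t^2 / τ := by positivity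
        have hexp : Real.exp (-c * t ^ 2 / τ) ≤ (c * t^2 / τ)⁻¹ := by
          rw [show -c * t^2 / τ = -(c * t^2 / τ) by ring, Real.exp_neg]
          exact inv_anti₀ hx (by linarith [Real.add_one_le_exp (c*t^2/τ)])
        have hpow : τ ^ (-(3:ℝ)/2) * τ = τ ^ (-(1:ℝ)/2) := by
          calc τ ^ (-(3:ℝ)/2) * τ = τ ^ (-(3:ℝ)/2) * τ ^ (1:ℝ) := by rw [Real.rpow_one]
            _ = τ ^ (-(3:ℝ)/2 + 1) := (Real.rpow_add hτ0 _ _).symm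
            _ = τ ^ (-(1:ℝ)/2) := by norm_num
        have heq : t * τ ^ (-(3:ℝ)/2) * (c*t^2/τ)⁻¹ = (c*t)⁻¹ * τ ^ (-(1:ℝ)/2) := by
          rw [← hpow]
          field_simp
        calc t * τ ^ (-(3:ℝ)/2) * Real.exp (-c * t ^ 2 / τ)
            ≤ t * τ ^ (-(3:ℝ)/2) * (c*t^2/τ)⁻¹ :=
              mul_le_mul_of_nonneg_left hexp (by positivity)
          _ = (c*t)⁻¹ * τ ^ (-(1:ℝ)/2) := heq
      have hval : ∫ τ in Ioc (Real.log 2) (t^2), (c*t)⁻¹ * τ ^ (-(1:ℝ)/2) ≤ 2/c := by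
        rw [integral_const_mul]
        have hI : ∫ τ in Ioc (Real.log 2) (t^2), τ ^ (-(1:ℝ)/2)
            = ((t^2) ^ (-(1:ℝ)/2 + 1) - (Real.log 2) ^ (-(1:ℝ)/2 + 1)) / (-(1:ℝ)/2 + 1) := by
          rw [← intervalIntegral.integral_of_le hlt, integral_rpow (Or.inl (by norm_num))]
        rw [hI]
        have he : (t^2 : ℝ) ^ (-(1:ℝ)/2 + 1) = t := by
          rw [← Real.rpow_natCast t 2, ← Real.rpow_mul ht.le]
          norm_num
        rw [he]
        have hlog : 0 ≤ (Real.log 2) ^ (-(1:ℝ)/2 + 1) := Real.rpow_nonneg h2.le _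
        calc (c*t)⁻¹ * ((t - (Real.log 2) ^ (-(1:ℝ)/2 + 1)) / (-(1:ℝ)/2 + 1))
            ≤ (c*t)⁻¹ * (2*t) := by
              apply mul_le_mul_of_nonneg_left _ (by positivity)
              rw [show (-(1:ℝ)/2 + 1) = 1/2 by norm_num,
                div_le_iff₀ (by norm_num : (0:ℝ) < 1/2)]
              nlinarith
          _ = 2/c := by field_simp
      linarith
    have h2c : (0:ℝ) ≤ 2 * Real.log 2 ^ (-(1:ℝ)/2) := by positivity
    linarith
end

section
/- Fix c > 0. For x₁ > 1, define Z₂(t,x,y) = (t/x₁²)·(t² + (x₁-y₁)/x₁ + |y'|²)^{-(n+4)/2}·exp(-c(t²+|y'|²)x₁/(x₁-y₁)) for y = (y₁,y') with x₁/2 ≤ y₁ < x₁, and 0 otherwise. Then ∫_{R^n} Z₂(t,x,y) dy ≤ C·t^{-2}·x₁^{-1} for all t > 0, with C depending only on n and c. -/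
/-!
Write `u = (x₁ - y₁) / x₁ ∈ (0, 1/2]` and `n = m + 1`. Bounding
`(t² + u + |y'|²) ^ (-(n + 4) / 2) ≤ (t² + u) ^ (-5/2) · u ^ (-m/2)` and dropping
`exp (-c t² / u)`, the `y'`-integral becomes the Gaussian integral
`∫ exp (-c |y'|² / u) dy' = (π u / c) ^ (m/2)`, whose power of `u` cancels the one lost before.
So the slice at `y₁` is at most `(π / c) ^ (m/2) · (t / x₁²) · (t² + u) ^ (-5/2)`, and since
`dy₁ = x₁ du`, integrating in `y₁` gives at most `x₁ ∫₀^∞ (t² + u) ^ (-5/2) du = (2/3) x₁ t⁻³`.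
-/

open Real MeasureTheory Set Module

theorem rpow_neg_add_le_rpow_neg_mul_rpow_neg {p q s u r : ℝ} (hp : 0 ≤ p) (hq : 0 ≤ q)
    (hs : 0 ≤ s) (hu : 0 < u) (hr : 0 ≤ r) :
    (s + u + r) ^ (-(p + q)) ≤ (s + u) ^ (-p) * u ^ (-q) := by
  have hsu : 0 < s + u := by positivity
  rw [neg_add, rpow_add (by positivity)]
  exact mul_le_mul (rpow_le_rpow_of_nonpos hsu (by linarith) (by linarith))
    (rpow_le_rpow_of_nonpos hu (by linarith) (by linarith)) (by positivity) (by positivity)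

section InnerProductSpace

variable {V : Type*} [NormedAddCommGroup V] [InnerProductSpace ℝ V] [FiniteDimensional ℝ V]
  [MeasurableSpace V] [BorelSpace V]

theorem lintegral_ofReal_exp_neg_mul_sq_norm {b : ℝ} (hb : 0 < b) :
    ∫⁻ v : V, ENNReal.ofReal (rexp (-b * ‖v‖ ^ 2)) =
      ENNReal.ofReal ((π / b) ^ (finrank ℝ V / 2 : ℝ)) := by
  have hint := GaussianFourier.integral_rexp_neg_mul_sq_norm (V := V) hb
  rw [← hint, ofReal_integral_eq_lintegral_ofReal
    (Integrable.of_integral_ne_zero (by rw [hint]; positivity))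
    (Filter.Eventually.of_forall fun _ => (exp_pos _).le)]

theorem lintegral_rpow_mul_exp_le {c s u : ℝ} (hc : 0 < c) (hs : 0 ≤ s) (hu : 0 < u) :
    ∫⁻ v : V, ENNReal.ofReal ((s + u + ‖v‖ ^ 2) ^ (-((finrank ℝ V : ℝ) + 5) / 2)
        * rexp (-c * (s + ‖v‖ ^ 2) / u))
      ≤ ENNReal.ofReal ((π / c) ^ (finrank ℝ V / 2 : ℝ) * (s + u) ^ (-(5 / 2 : ℝ))) := by
  set n : ℝ := (finrank ℝ V : ℝ)
  set A := (s + u) ^ (-(5 / 2 : ℝ)) * u ^ (-(n / 2)) with hA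
  have hpt : ∀ v : V, (s + u + ‖v‖ ^ 2) ^ (-(n + 5) / 2) * rexp (-c * (s + ‖v‖ ^ 2) / u)
      ≤ A * rexp (-(c / u) * ‖v‖ ^ 2) := by
    intro v
    have hpow : (s + u + ‖v‖ ^ 2) ^ (-(n + 5) / 2) ≤ A := by
      rw [show -(n + 5) / 2 = -(5 / 2 + n / 2) by ring]
      exact rpow_neg_add_le_rpow_neg_mul_rpow_neg (by norm_num) (by positivity) hs hu
        (by positivity)
    have hexp : -c * (s + ‖v‖ ^ 2) / u ≤ -(c / u) * ‖v‖ ^ 2 := by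
      have : 0 ≤ c * s / u := by positivity
      linarith [show -c * (s + ‖v‖ ^ 2) / u = -(c / u) * ‖v‖ ^ 2 - c * s / u by ring]
    exact mul_le_mul hpow (exp_le_exp.2 hexp) (exp_pos _).le (by positivity)
  calc _ ≤ ∫⁻ v : V, ENNReal.ofReal A * ENNReal.ofReal (rexp (-(c / u) * ‖v‖ ^ 2)) :=
        lintegral_mono fun v => (ENNReal.ofReal_le_ofReal (hpt v)).trans_eq
          (ENNReal.ofReal_mul (by positivity))
    _ = ENNReal.ofReal (A * (π / (c / u)) ^ (n / 2)) := by
        rw [lintegral_const_mul' _ _ ENNReal.ofReal_ne_top,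
          lintegral_ofReal_exp_neg_mul_sq_norm (by positivity),
          ← ENNReal.ofReal_mul (by positivity)]
    _ = _ := by
        congr 1
        have hcancel : u ^ (-(n / 2)) * u ^ (n / 2) = 1 := by
          rw [← rpow_add hu, neg_add_cancel, rpow_zero]
        rw [div_div_eq_mul_div, mul_div_right_comm, mul_rpow (by positivity) hu.le, hA]
        linear_combination (s + u) ^ (-(5 / 2 : ℝ)) * (π / c) ^ (n / 2) * hcancel

end InnerProductSpace

theorem setLIntegral_Ico_rpow_neg_le {p s x a : ℝ} (hp : 1 < p) (hs : 0 < s) (hx : 0 < x)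
    (ha : a ≤ x) :
    ∫⁻ y in Ico a x, ENNReal.ofReal ((s + (x - y) / x) ^ (-p))
      ≤ ENNReal.ofReal (x * s ^ (1 - p) / (p - 1)) := by
  have hbase : ∀ y ∈ Icc a x, 0 < s + (x - y) / x := fun y hy =>
    add_pos_of_pos_of_nonneg hs (div_nonneg (by linarith [hy.2]) hx.le)
  have hcont : ContinuousOn (fun y => (s + (x - y) / x) ^ (-p)) (Icc a x) :=
    ContinuousOn.rpow_const (by fun_prop) fun y hy => Or.inl (hbase y hy).ne'
  have hderiv : ∀ y ∈ uIcc a x,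
      HasDerivAt (fun y => x / (p - 1) * (s + (x - y) / x) ^ (1 - p))
        ((s + (x - y) / x) ^ (-p)) y := by
    intro y hy
    rw [uIcc_of_le ha] at hy
    have hlin : HasDerivAt (fun y => s + (x - y) / x) (-1 / x) y := by
      simpa using (((hasDerivAt_id y).const_sub x).div_const x).const_add s
    refine ((hlin.rpow_const (p := 1 - p) (Or.inl (hbase y hy).ne')).const_mul
      (x / (p - 1))).congr_deriv ?_
    rw [show 1 - p - 1 = -p by ring]
    field_simp [(sub_pos.2 hp).ne']
    ring
  rw [← ofReal_integral_eq_lintegral_ofReal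
      (hcont.integrableOn_Icc.mono_set Ico_subset_Icc_self)
      (ae_restrict_of_forall_mem measurableSet_Ico fun y hy =>
        (rpow_pos_of_pos (hbase y (Ico_subset_Icc_self hy)) _).le),
    integral_Ico_eq_integral_Ioo, ← integral_Ioc_eq_integral_Ioo,
    ← intervalIntegral.integral_of_le ha,
    intervalIntegral.integral_eq_sub_of_hasDerivAt hderiv (hcont.intervalIntegrable_of_Icc ha)]
  apply ENNReal.ofReal_le_ofReal
  have : 0 ≤ x / (p - 1) * (s + (x - a) / x) ^ (1 - p) :=
    mul_nonneg (div_nonneg hx.le (by linarith)) (rpow_pos_of_pos (hbase a ⟨le_rfl, ha⟩) _).le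
  simp only [sub_self, zero_div, add_zero]
  rw [mul_div_right_comm]
  linarith

/-- The kernel `Z₂(t, x, y)`, with `x₁` the first coordinate of `x` and `y = (y₁, y')`. -/
noncomputable def kernelZ₂ (m : ℕ) (c x₁ t : ℝ) (y : ℝ × EuclideanSpace ℝ (Fin m)) : ℝ :=
  if x₁ / 2 ≤ y.1 ∧ y.1 < x₁ then
    (t / x₁ ^ 2) * (t ^ 2 + (x₁ - y.1) / x₁ + ‖y.2‖ ^ 2) ^ (-((m : ℝ) + 5) / 2)
      * rexp (-c * (t ^ 2 + ‖y.2‖ ^ 2) * x₁ / (x₁ - y.1))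
  else 0

section Kernel

variable {m : ℕ} {c x₁ t : ℝ}

theorem lintegral_kernelZ₂_slice_le (hc : 0 < c) (hx : 0 < x₁) (ht : 0 ≤ t) {y₁ : ℝ}
    (hy : y₁ ∈ Ico (x₁ / 2) x₁) :
    ∫⁻ y', ENNReal.ofReal ‖kernelZ₂ m c x₁ t (y₁, y')‖
      ≤ ENNReal.ofReal (t / x₁ ^ 2 * (π / c) ^ ((m : ℝ) / 2))
        * ENNReal.ofReal ((t ^ 2 + (x₁ - y₁) / x₁) ^ (-(5 / 2 : ℝ))) := by
  have hu : 0 < (x₁ - y₁) / x₁ := div_pos (sub_pos.2 hy.2) hx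
  have hgauss := lintegral_rpow_mul_exp_le (V := EuclideanSpace ℝ (Fin m)) hc (sq_nonneg t) hu
  rw [finrank_euclideanSpace_fin] at hgauss
  set u := (x₁ - y₁) / x₁ with hu_def
  calc _ = ∫⁻ y' : EuclideanSpace ℝ (Fin m), ENNReal.ofReal (t / x₁ ^ 2) *
        ENNReal.ofReal ((t ^ 2 + u + ‖y'‖ ^ 2) ^ (-((m : ℝ) + 5) / 2)
          * rexp (-c * (t ^ 2 + ‖y'‖ ^ 2) / u)) := by
        refine lintegral_congr fun y' => ?_
        rw [kernelZ₂, if_pos (mem_Ico.1 hy), norm_of_nonneg (by positivity), mul_assoc,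
          ENNReal.ofReal_mul (by positivity), hu_def, div_div_eq_mul_div]
    _ = ENNReal.ofReal (t / x₁ ^ 2) * ∫⁻ y' : EuclideanSpace ℝ (Fin m),
        ENNReal.ofReal ((t ^ 2 + u + ‖y'‖ ^ 2) ^ (-((m : ℝ) + 5) / 2)
          * rexp (-c * (t ^ 2 + ‖y'‖ ^ 2) / u)) :=
        lintegral_const_mul' _ _ ENNReal.ofReal_ne_top
    _ ≤ _ := by
        rw [ENNReal.ofReal_mul (by positivity), mul_assoc,
          ← ENNReal.ofReal_mul (by positivity)]
        gcongr

theorem lintegral_kernelZ₂_le (hc : 0 < c) (hx : 0 < x₁) (ht : 0 < t) :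
    ∫⁻ y, ENNReal.ofReal ‖kernelZ₂ m c x₁ t y‖
      ≤ ENNReal.ofReal (2 / 3 * (π / c) ^ ((m : ℝ) / 2) * t ^ (-2 : ℝ) * x₁⁻¹) := by
  set K := (π / c) ^ ((m : ℝ) / 2)
  rw [Measure.volume_eq_prod]
  calc _ ≤ ∫⁻ y₁, ∫⁻ y', ENNReal.ofReal ‖kernelZ₂ m c x₁ t (y₁, y')‖ := lintegral_prod_le _
    _ ≤ ∫⁻ y₁ in Ico (x₁ / 2) x₁, ENNReal.ofReal (t / x₁ ^ 2 * K) *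
          ENNReal.ofReal ((t ^ 2 + (x₁ - y₁) / x₁) ^ (-(5 / 2 : ℝ))) := by
        rw [← lintegral_indicator measurableSet_Ico]
        refine lintegral_mono fun y₁ => ?_
        by_cases hy : y₁ ∈ Ico (x₁ / 2) x₁
        · rw [indicator_of_mem hy]
          exact lintegral_kernelZ₂_slice_le hc hx ht.le hy
        · simp [kernelZ₂, indicator_of_notMem hy, if_neg (mt mem_Ico.2 hy)]
    _ = ENNReal.ofReal (t / x₁ ^ 2 * K) * ∫⁻ y₁ in Ico (x₁ / 2) x₁,
          ENNReal.ofReal ((t ^ 2 + (x₁ - y₁) / x₁) ^ (-(5 / 2 : ℝ))) :=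
        lintegral_const_mul' _ _ ENNReal.ofReal_ne_top
    _ ≤ ENNReal.ofReal (t / x₁ ^ 2 * K) *
          ENNReal.ofReal (x₁ * (t ^ 2) ^ (1 - 5 / 2 : ℝ) / (5 / 2 - 1)) := by
        gcongr
        exact setLIntegral_Ico_rpow_neg_le (by norm_num) (by positivity) hx (by linarith)
    _ = _ := by
        rw [← ENNReal.ofReal_mul (by positivity), ← rpow_natCast_mul ht.le,
          show (-2 : ℝ) = (2 : ℕ) * (1 - 5 / 2) + 1 by norm_num, rpow_add_one ht.ne']
        congr 1
        field_simp
        ring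

end Kernel

/-- with `n = m + 1 ≥ 1` and `y = (y₁, y') ∈ ℝ × ℝ^{n-1}`. -/
theorem stmt_9 (m : ℕ) (c : ℝ) (hc : 0 < c) :
    ∃ C > 0, ∀ x₁ : ℝ, 1 < x₁ → ∀ t : ℝ, 0 < t →
      ∫ y : ℝ × EuclideanSpace ℝ (Fin m),
          (if x₁ / 2 ≤ y.1 ∧ y.1 < x₁ then
            (t / x₁ ^ 2) * (t ^ 2 + (x₁ - y.1) / x₁ + ‖y.2‖ ^ 2) ^ (-((m : ℝ) + 5) / 2)
              * Real.exp (-c * (t ^ 2 + ‖y.2‖ ^ 2) * x₁ / (x₁ - y.1))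
          else 0)
        ≤ C * t ^ (-2 : ℝ) * x₁⁻¹ := by
  refine ⟨2 / 3 * (π / c) ^ ((m : ℝ) / 2), by positivity, fun x₁ hx₁ t ht => ?_⟩
  change ∫ y, kernelZ₂ m c x₁ t y ≤ _
  exact (le_norm_self _).trans <| (norm_integral_le_lintegral_norm _).trans <|
    ENNReal.toReal_le_of_le_ofReal (by positivity)
      (lintegral_kernelZ₂_le hc (by linarith) ht)
end

section
/- Fix c > 0. For x₁ > 0 define Z₄(t,x,y) = (t/(x₁y₁))·(log(x₁/y₁))^{-5/2}·exp(-c t²/log(x₁/y₁))·exp(-c|y'|²) for 1 < y₁ < x₁/2, and 0 otherwise. Then ∫_{R^n} Z₄(t,x,y) dy ≤ C·t^{-2}·x₁^{-1} for all t > 0, with C depending only on n and c. -/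
open Real MeasureTheory Set

/-!
Fubini splits off the Gaussian factor in `y'`. In the `y₁`-factor put `L = log (x₁ / y₁)` and
`a = c t²`. Since `√(a / L) ≤ exp (a / (2 L))`, the integrand is at most
`(t / x₁) a^{-1/2} y₁⁻¹ L⁻² exp (-a / (2 L))`, which is the `y₁`-derivative of
`-(2 t / x₁) a^{-3/2} exp (-a / (2 L))`, a function with values in `[-(2 t / x₁) a^{-3/2}, 0]`.
Hence the `y₁`-integral is at most `2 (t / x₁) (c t²)^{-3/2} = 2 c^{-3/2} t^{-2} x₁⁻¹`.
-/

theorem sqrt_le_exp_half (s : ℝ) : √s ≤ exp (s / 2) := by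
  rw [exp_half]
  exact sqrt_le_sqrt (by linarith [add_one_le_exp s])

theorem rpow_neg_five_halves_eq {u : ℝ} (hu : 0 ≤ u) :
    u ^ (-(5 : ℝ) / 2) = (u ^ 2)⁻¹ * (√u)⁻¹ := by
  rw [neg_div, rpow_neg hu, show (5 : ℝ) / 2 = (2 : ℕ) + 1 / 2 by norm_num,
    rpow_add' hu (by norm_num), rpow_natCast, ← sqrt_eq_rpow, mul_inv]

theorem rpow_neg_five_halves_mul_exp_neg_div_le {a u : ℝ} (ha : 0 < a) (hu : 0 < u) :
    u ^ (-(5 : ℝ) / 2) * exp (-a / u) ≤ (√a)⁻¹ * ((u ^ 2)⁻¹ * exp (-a / (2 * u))) := by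
  have hsplit : exp (-a / u) = exp (-a / (2 * u)) * exp (-a / (2 * u)) := by
    rw [← exp_add]; congr 1; field_simp; ring
  have key : √a * exp (-a / (2 * u)) ≤ √u := by
    calc √a * exp (-a / (2 * u)) = √u * (√(a / u) * exp (-(a / u / 2))) := by
          rw [sqrt_div ha.le, show -a / (2 * u) = -(a / u / 2) by ring]
          field_simp
      _ ≤ √u * (exp (a / u / 2) * exp (-(a / u / 2))) := by
          gcongr; exact sqrt_le_exp_half _
      _ = √u := by rw [← exp_add, add_neg_cancel, exp_zero, mul_one]
  rw [rpow_neg_five_halves_eq hu.le, hsplit]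
  have hsa := sqrt_pos.2 ha
  have hsu := sqrt_pos.2 hu
  calc (u ^ 2)⁻¹ * (√u)⁻¹ * (exp (-a / (2 * u)) * exp (-a / (2 * u)))
      = (√a)⁻¹ * ((u ^ 2)⁻¹ * exp (-a / (2 * u)))
          * ((√u)⁻¹ * (√a * exp (-a / (2 * u)))) := by
        field_simp
    _ ≤ (√a)⁻¹ * ((u ^ 2)⁻¹ * exp (-a / (2 * u))) * ((√u)⁻¹ * √u) := by gcongr
    _ = _ := by rw [inv_mul_cancel₀ hsu.ne', mul_one]

theorem hasDerivAt_log_div {x y : ℝ} (hx : x ≠ 0) (hy : y ≠ 0) :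
    HasDerivAt (fun y => log (x / y)) (-y⁻¹) y := by
  have := ((hasDerivAt_inv hy).const_mul x).log (by simp [hx, hy])
  convert this using 1
  · simp only [div_eq_mul_inv]
  · field_simp

theorem hasDerivAt_exp_neg_div_two_log_div {a x y : ℝ} (hx : x ≠ 0) (hy : y ≠ 0)
    (hL : log (x / y) ≠ 0) :
    HasDerivAt (fun y => exp (-a / (2 * log (x / y))))
      (-(a / 2) * (y⁻¹ * ((log (x / y) ^ 2)⁻¹ * exp (-a / (2 * log (x / y)))))) y := by
  have := ((((hasDerivAt_log_div hx hy).const_mul 2).inv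
    (mul_ne_zero two_ne_zero hL)).const_mul (-a)).exp
  simp only [Pi.inv_apply, ← div_eq_mul_inv] at this
  convert this using 1
  field_simp

theorem setIntegral_Ioo_inv_mul_log_div_rpow_mul_exp_le {a p q x : ℝ} (ha : 0 < a) (hp : 0 < p)
    (hqx : q < x) :
    ∫ y in Ioo p q, y⁻¹ * (log (x / y) ^ (-(5 : ℝ) / 2) * exp (-a / log (x / y)))
      ≤ 2 * (a * √a)⁻¹ := by
  rcases le_or_gt q p with hqp | hpq
  · rw [Ioo_eq_empty (not_lt.2 hqp), Measure.restrict_empty, integral_zero_measure]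
    positivity
  have hy0 : ∀ y ∈ Icc p q, 0 < y := fun y hy => hp.trans_le hy.1
  have hL : ∀ y ∈ Icc p q, 0 < log (x / y) := fun y hy =>
    log_pos ((one_lt_div (hy0 y hy)).2 (hy.2.trans_lt hqx))
  have hx : x ≠ 0 := (hp.trans (hpq.trans hqx)).ne'
  set F : ℝ → ℝ := fun y => -(2 * (a * √a)⁻¹) * exp (-a / (2 * log (x / y)))
  have hF : ∀ y ∈ Icc p q, HasDerivAt F
      (y⁻¹ * ((√a)⁻¹ * ((log (x / y) ^ 2)⁻¹ * exp (-a / (2 * log (x / y)))))) y := by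
    intro y hy
    refine ((hasDerivAt_exp_neg_div_two_log_div hx (hy0 y hy).ne' (hL y hy).ne').const_mul
      (-(2 * (a * √a)⁻¹))).congr_deriv ?_
    have := sqrt_pos.2 ha
    field_simp
  have hcont : ContinuousOn
      (fun y => y⁻¹ * (log (x / y) ^ (-(5 : ℝ) / 2) * exp (-a / log (x / y)))) (Icc p q) := by
    have hLc : ContinuousOn (fun y => log (x / y)) (Icc p q) :=
      (continuousOn_const.div continuousOn_id fun y hy => (hy0 y hy).ne').log
        fun y hy => div_ne_zero hx (hy0 y hy).ne'
    exact (continuousOn_inv₀.mono fun y hy => (hy0 y hy).ne').mul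
      ((hLc.rpow_const fun y hy => Or.inl (hL y hy).ne').mul
        (continuousOn_const.div hLc fun y hy => (hL y hy).ne').rexp)
  rw [← integral_Ioc_eq_integral_Ioo, ← intervalIntegral.integral_of_le hpq.le]
  calc _ ≤ F q - F p := intervalIntegral.integral_le_sub_of_hasDeriv_right_of_le hpq.le
          (fun y hy => (hF y hy).continuousAt.continuousWithinAt)
          (fun y hy => (hF y (Ioo_subset_Icc_self hy)).hasDerivWithinAt) hcont.integrableOn_Icc
          (fun y hy => mul_le_mul_of_nonneg_left
            (rpow_neg_five_halves_mul_exp_neg_div_le ha (hL y (Ioo_subset_Icc_self hy)))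
            (inv_nonneg.2 (hy0 y (Ioo_subset_Icc_self hy)).le))
    _ ≤ 2 * (a * √a)⁻¹ := by
      have hE : exp (-a / (2 * log (x / p))) ≤ 1 :=
        exp_le_one_iff.2 (div_nonpos_of_nonpos_of_nonneg (by linarith)
          (by linarith [hL p (left_mem_Icc.2 hpq.le)]))
      have : 0 < 2 * (a * √a)⁻¹ := by positivity
      simp only [F]
      nlinarith [exp_pos (-a / (2 * log (x / q)))]

noncomputable def logKernel (c t x₁ y₁ : ℝ) : ℝ :=
  if 1 < y₁ ∧ y₁ < x₁ / 2 then
    t / (x₁ * y₁) * log (x₁ / y₁) ^ (-(5 : ℝ) / 2) * exp (-c * t ^ 2 / log (x₁ / y₁))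
  else 0

theorem integral_logKernel_le {c x₁ t : ℝ} (hc : 0 < c) (hx₁ : 0 < x₁) (ht : 0 < t) :
    ∫ y₁, logKernel c t x₁ y₁ ≤ 2 * (c * √c)⁻¹ * t ^ (-2 : ℝ) * x₁⁻¹ := by
  have hset : ∫ y₁, logKernel c t x₁ y₁
      = t / x₁ * ∫ y in Ioo 1 (x₁ / 2),
          y⁻¹ * (log (x₁ / y) ^ (-(5 : ℝ) / 2) * exp (-(c * t ^ 2) / log (x₁ / y))) := by
    rw [← integral_const_mul, ← integral_indicator measurableSet_Ioo]
    congr 1 with y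
    simp only [logKernel, indicator_apply, mem_Ioo, neg_mul]
    split_ifs
    · field_simp
    · rfl
  calc _ = _ := hset
    _ ≤ t / x₁ * (2 * (c * t ^ 2 * √(c * t ^ 2))⁻¹) := by
      gcongr
      exact setIntegral_Ioo_inv_mul_log_div_rpow_mul_exp_le (by positivity) one_pos (by linarith)
    _ = 2 * (c * √c)⁻¹ * t ^ (-2 : ℝ) * x₁⁻¹ := by
      rw [sqrt_mul hc.le, sqrt_sq ht.le, rpow_neg ht.le, rpow_two]
      have := sqrt_pos.2 hc
      field_simp

/-- with `n = m + 1 ≥ 1` and `y = (y₁, y') ∈ ℝ × ℝ^{n-1}`. -/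
theorem stmt_10 (m : ℕ) (c : ℝ) (hc : 0 < c) :
    ∃ C > 0, ∀ x₁ : ℝ, 0 < x₁ → ∀ t : ℝ, 0 < t →
      ∫ y : ℝ × EuclideanSpace ℝ (Fin m),
          (if 1 < y.1 ∧ y.1 < x₁ / 2 then
            (t / (x₁ * y.1)) * (Real.log (x₁ / y.1)) ^ (-(5 : ℝ) / 2)
              * Real.exp (-c * t ^ 2 / Real.log (x₁ / y.1))
              * Real.exp (-c * ‖y.2‖ ^ 2)
          else 0)
        ≤ C * t ^ (-2 : ℝ) * x₁⁻¹ := by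
  set G := ∫ y' : EuclideanSpace ℝ (Fin m), exp (-c * ‖y'‖ ^ 2) with hG_def
  have hG : 0 < G := by
    rw [hG_def, GaussianFourier.integral_rexp_neg_mul_sq_norm hc]
    positivity
  refine ⟨2 * (c * √c)⁻¹ * G, by positivity, fun x₁ hx₁ t ht => ?_⟩
  calc _ = (∫ y₁, logKernel c t x₁ y₁) * G := by
        rw [Measure.volume_eq_prod, ← integral_prod_mul]
        simp only [logKernel, ite_zero_mul]
    _ ≤ 2 * (c * √c)⁻¹ * t ^ (-2 : ℝ) * x₁⁻¹ * G := by
        gcongr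
        exact integral_logKernel_le hc hx₁ ht
    _ = _ := by ring
end

section
/- Suppose f: R^n → R is bounded with |f| ≤ 1 and t ↦ P_t f is a C¹ family of functions satisfying ‖∂_t P_t f‖_∞ ≤ t^{α-1} for all t > 0 and P_t f → f pointwise a.e. as t → 0, where 0 < α < 1. Suppose moreover |∇_x P_t f(x)| ≤ C t^{α-1} for all x, t. Then, after correction on a null set, |f(x)-f(y)| ≤ C'·|x-y|^α for all x, y ∈ R^n, with C' depending only on C and α. -/
open Real MeasureTheory Filter Topology

/-!
Writing `g = lim_{t → 0⁺} P_t f`, the bound `‖∂_t P_t f‖ ≤ t^(α-1)` integrates to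
`|g - P_t f| ≤ t^α / α`, while the gradient bound makes `P_t f` Lipschitz with constant
`C t^(α-1)`. Telescoping through `P_t f(x)` and `P_t f(y)` with `t = |x - y|` gives
`|g(x) - g(y)| ≤ (2/α + C) |x - y|^α`.
-/

theorem norm_sub_le_rpow_sub_rpow_div_of_norm_deriv_le {E : Type*} [NormedAddCommGroup E]
    [NormedSpace ℝ E] {u u' : ℝ → E} {α s t : ℝ} (hα : α ≠ 0)
    (hu : ∀ r, 0 < r → HasDerivAt u (u' r) r) (hu' : ∀ r, 0 < r → ‖u' r‖ ≤ r ^ (α - 1))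
    (hs : 0 < s) (hst : s ≤ t) :
    ‖u t - u s‖ ≤ (t ^ α - s ^ α) / α := by
  have hpos : ∀ r ∈ Set.Icc s t, 0 < r := fun r hr => hs.trans_le hr.1
  have hB : ∀ r ∈ Set.Icc s t,
      HasDerivAt (fun r : ℝ => (r ^ α - s ^ α) / α) (r ^ (α - 1)) r := by
    intro r hr
    have := ((hasDerivAt_rpow_const (p := α) (Or.inl (hpos r hr).ne')).sub_const
      (s ^ α)).div_const α
    rwa [mul_div_cancel_left₀ _ hα] at this
  refine image_norm_le_of_norm_deriv_right_le_deriv_boundary' (f := fun r => u r - u s)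
    (B := fun r => (r ^ α - s ^ α) / α) (fun r hr => ?_) (fun r hr => ?_) (by simp)
    (fun r hr => (hB r hr).continuousAt.continuousWithinAt)
    (fun r hr => (hB r ⟨hr.1, hr.2.le⟩).hasDerivWithinAt)
    (fun r hr => hu' r (hpos r ⟨hr.1, hr.2.le⟩)) ⟨hst, le_rfl⟩
  · exact ((hu r (hpos r hr)).sub_const _).continuousAt.continuousWithinAt
  · exact ((hu r (hpos r ⟨hr.1, hr.2.le⟩)).sub_const _).hasDerivWithinAt

section LimitAtZero

variable {Y : Type*} [PseudoMetricSpace Y] {u : ℝ → Y} {φ : ℝ → ℝ}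

theorem cauchy_map_nhdsGT_zero_of_dist_le (hφ : Tendsto φ (𝓝[>] 0) (𝓝 0))
    (h : ∀ s t, 0 < s → s ≤ t → dist (u s) (u t) ≤ φ t) :
    Cauchy (map u (𝓝[>] 0)) := by
  refine Metric.cauchy_iff.2 ⟨map_neBot, fun ε hε => ?_⟩
  obtain ⟨δ, hφδ, hδ⟩ :=
    ((hφ.eventually (gt_mem_nhds (half_pos hε))).and self_mem_nhdsWithin).exists
  have hclose : ∀ a ∈ Set.Ioo 0 δ, dist (u a) (u δ) < ε / 2 :=
    fun a ha => (h a δ ha.1 ha.2.le).trans_lt hφδ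
  refine ⟨u '' Set.Ioo 0 δ, image_mem_map (Ioo_mem_nhdsGT hδ), ?_⟩
  rintro _ ⟨a, ha, rfl⟩ _ ⟨b, hb, rfl⟩
  calc dist (u a) (u b) ≤ dist (u a) (u δ) + dist (u b) (u δ) := dist_triangle_right _ _ _
    _ < ε / 2 + ε / 2 := add_lt_add (hclose a ha) (hclose b hb)
    _ = ε := add_halves ε

theorem dist_le_of_tendsto_nhdsGT_zero {L : Y} (hL : Tendsto u (𝓝[>] 0) (𝓝 L))
    (h : ∀ s t, 0 < s → s ≤ t → dist (u s) (u t) ≤ φ t) {t : ℝ} (ht : 0 < t) :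
    dist L (u t) ≤ φ t := by
  refine le_of_tendsto (hL.dist tendsto_const_nhds) ?_
  filter_upwards [Ioo_mem_nhdsGT ht] with s hs
  exact h s t hs.1 hs.2.le

end LimitAtZero

theorem dist_le_rpow_of_forall_dist_le {X Y : Type*} [MetricSpace X] [PseudoMetricSpace Y]
    {g : X → Y} {Q : ℝ → X → Y} {α A B : ℝ} (hα : α ≠ 0)
    (happrox : ∀ t, 0 < t → ∀ x, dist (g x) (Q t x) ≤ A * t ^ α)
    (hlip : ∀ t, 0 < t → ∀ x y, dist (Q t x) (Q t y) ≤ B * t ^ (α - 1) * dist x y)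
    (x y : X) : dist (g x) (g y) ≤ (2 * A + B) * dist x y ^ α := by
  rcases eq_or_ne x y with rfl | hxy
  · simp [zero_rpow hα]
  set t := dist x y
  have ht : 0 < t := dist_pos.2 hxy
  have hlip_t : dist (Q t x) (Q t y) ≤ B * t ^ α := by
    have := hlip t ht x y
    rwa [mul_assoc, ← rpow_add_one ht.ne', sub_add_cancel] at this
  calc dist (g x) (g y) ≤ dist (g x) (Q t x) + dist (Q t x) (Q t y) + dist (Q t y) (g y) :=
        dist_triangle4 _ _ _ _
    _ ≤ A * t ^ α + B * t ^ α + A * t ^ α := by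
        gcongr
        · exact happrox t ht x
        · rw [dist_comm]; exact happrox t ht y
    _ = (2 * A + B) * t ^ α := by ring

theorem stmt_11_general (n : ℕ) (α : ℝ) (hα0 : 0 < α)
    (C : ℝ) (hC : 0 < C) :
    ∃ C' > 0, ∀ (f : EuclideanSpace ℝ (Fin n) → ℝ)
      (P P' : ℝ → EuclideanSpace ℝ (Fin n) → ℝ),
      (∀ x, |f x| ≤ 1) →
      -- C¹ family in t, with derivative P' bounded by t^(α-1)
      (∀ t : ℝ, 0 < t → ∀ x, HasDerivAt (fun s => P s x) (P' t x) t) →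
      (∀ t : ℝ, 0 < t → ∀ x, |P' t x| ≤ t ^ (α - 1)) →
      -- pointwise a.e. convergence P_t f → f as t → 0⁺
      (∀ᵐ x : EuclideanSpace ℝ (Fin n),
        Tendsto (fun t => P t x) (nhdsWithin 0 (Set.Ioi 0)) (nhds (f x))) →
      -- gradient bound in x
      (∀ t : ℝ, 0 < t → ∀ x, DifferentiableAt ℝ (P t) x ∧
        ‖fderiv ℝ (P t) x‖ ≤ C * t ^ (α - 1)) →
      ∃ g : EuclideanSpace ℝ (Fin n) → ℝ,
        g =ᵐ[volume] f ∧ ∀ x y, |g x - g y| ≤ C' * ‖x - y‖ ^ α := by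
  refine ⟨2 * α⁻¹ + C, by positivity, fun f P P' _ hP hP' hae hgrad => ?_⟩
  have htime : ∀ x s t, 0 < s → s ≤ t → dist (P s x) (P t x) ≤ α⁻¹ * t ^ α := by
    intro x s t hs hst
    rw [dist_comm, dist_eq_norm]
    refine (norm_sub_le_rpow_sub_rpow_div_of_norm_deriv_le hα0.ne' (fun r hr => hP r hr x)
      (fun r hr => hP' r hr x) hs hst).trans ?_
    rw [inv_mul_eq_div]
    gcongr
    linarith [rpow_nonneg hs.le α]
  have hvanish : Tendsto (fun t : ℝ => α⁻¹ * t ^ α) (𝓝[>] 0) (𝓝 0) := by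
    simpa [zero_rpow hα0.ne'] using
      ((continuousAt_rpow_const 0 α (Or.inr hα0.le)).tendsto.const_mul α⁻¹).mono_left
        nhdsWithin_le_nhds
  choose g hg using fun x =>
    cauchy_map_iff_exists_tendsto.1 (cauchy_map_nhdsGT_zero_of_dist_le hvanish (htime x))
  have hlip : ∀ t, 0 < t → ∀ x y, dist (P t x) (P t y) ≤ C * t ^ (α - 1) * dist x y :=
    fun t ht x y => by
      simpa only [dist_eq_norm] using convex_univ.norm_image_sub_le_of_norm_fderiv_le
        (fun z _ => (hgrad t ht z).1) (fun z _ => (hgrad t ht z).2) trivial trivial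
  refine ⟨g, ?_, fun x y => ?_⟩
  · filter_upwards [hae] with x hx using tendsto_nhds_unique (hg x) hx
  · simpa only [dist_eq_norm, Real.norm_eq_abs, mul_one] using dist_le_rpow_of_forall_dist_le
      hα0.ne' (fun t ht x => dist_le_of_tendsto_nhdsGT_zero (hg x) (htime x) ht) hlip x y

/-- Abstract version of the first half of the proof of Theorem 1.1. -/
theorem stmt_11 (n : ℕ) (hn : 1 ≤ n) (α : ℝ) (hα0 : 0 < α) (hα1 : α < 1)
    (C : ℝ) (hC : 0 < C) :
    ∃ C' > 0, ∀ (f : EuclideanSpace ℝ (Fin n) → ℝ)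
      (P P' : ℝ → EuclideanSpace ℝ (Fin n) → ℝ),
      (∀ x, |f x| ≤ 1) →
      -- C¹ family in t, with derivative P' bounded by t^(α-1)
      (∀ t : ℝ, 0 < t → ∀ x, HasDerivAt (fun s => P s x) (P' t x) t) →
      (∀ t : ℝ, 0 < t → ∀ x, |P' t x| ≤ t ^ (α - 1)) →
      -- pointwise a.e. convergence P_t f → f as t → 0⁺
      (∀ᵐ x : EuclideanSpace ℝ (Fin n),
        Tendsto (fun t => P t x) (nhdsWithin 0 (Set.Ioi 0)) (nhds (f x))) →
      -- gradient bound in x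
      (∀ t : ℝ, 0 < t → ∀ x, DifferentiableAt ℝ (P t) x ∧
        ‖fderiv ℝ (P t) x‖ ≤ C * t ^ (α - 1)) →
      ∃ g : EuclideanSpace ℝ (Fin n) → ℝ,
        g =ᵐ[volume] f ∧ ∀ x y, |g x - g y| ≤ C' * ‖x - y‖ ^ α :=
  stmt_11_general n α hα0 C hC
end

section
/- Fix c > 0 and n ≥ 1, and let 0 < α < 1. For x = (x₁,0,…,0) with x₁ > 1, consider K₂ as above. Then ∫_{R^n} (t/x₁)·(t² + |x₁-y₁|/x₁ + |y'|²)^{-(n+2-α)/2} dy ≤ C·t^α for all t > 0, where C depends only on n, α. -/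
open Real MeasureTheory

/-- with `n = m + 1 ≥ 1` and `y = (y₁, y') ∈ ℝ × ℝ^{n-1}`;
the exponent `(n+2-α)/2` becomes `(m+3-α)/2`. -/
theorem stmt_13 (m : ℕ) (α : ℝ) (hα0 : 0 < α) (hα1 : α < 1) :
    ∃ C > 0, ∀ x₁ : ℝ, 1 < x₁ → ∀ t : ℝ, 0 < t →
      ∫ y : ℝ × EuclideanSpace ℝ (Fin m),
          (t / x₁) * (t ^ 2 + |x₁ - y.1| / x₁ + ‖y.2‖ ^ 2) ^ (-((m : ℝ) + 3 - α) / 2)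
        ≤ C * t ^ α := by
  set E := EuclideanSpace ℝ (Fin m) with hE
  set r : ℝ := (5 - α) / 4 with hr_def
  set q : ℝ := (2 * m + 1 - α) / 4 with hq_def
  have hm0 : (0 : ℝ) ≤ (m : ℝ) := Nat.cast_nonneg m
  have hr1 : 1 < r := by rw [hr_def]; linarith
  have hr0 : 0 < r := by linarith
  have hq0 : 0 < q := by rw [hq_def]; linarith
  have hmq : (m : ℝ) < 2 * q := by rw [hq_def]; linarith
  -- the two model integrable functions
  have hK1i : Integrable (fun w : ℝ => (1 + |w|) ^ (-r)) := by
    have h := integrable_one_add_norm (E := ℝ) (μ := volume) (r := r)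
      (by simpa using hr1)
    simpa [Real.norm_eq_abs] using h
  have hfr : Module.finrank ℝ E = m := finrank_euclideanSpace_fin
  have hK2i : Integrable (fun w : E => (1 + ‖w‖ ^ 2) ^ (-q)) := by
    have h := integrable_rpow_neg_one_add_norm_sq (E := E) (μ := volume) (r := 2 * q)
      (by rw [hfr]; exact hmq)
    have : ∀ w : E, ((1 : ℝ) + ‖w‖ ^ 2) ^ (-(2 * q) / 2) = (1 + ‖w‖ ^ 2) ^ (-q) := by
      intro w; congr 1; ring
    simpa [this] using h
  set K₁ : ℝ := ∫ w : ℝ, (1 + |w|) ^ (-r) with hK1_def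
  set K₂ : ℝ := ∫ w : E, (1 + ‖w‖ ^ 2) ^ (-q) with hK2_def
  have hK1 : 0 ≤ K₁ := integral_nonneg fun w => rpow_nonneg (by positivity) _
  have hK2 : 0 ≤ K₂ := integral_nonneg fun w => rpow_nonneg (by positivity) _
  refine ⟨K₁ * K₂ + 1, by positivity, ?_⟩
  intro x₁ hx₁ t ht
  have hx0 : (0 : ℝ) < x₁ := lt_trans one_pos hx₁
  have ht2 : (0 : ℝ) < t ^ 2 := by positivity
  -- the dominating product functions
  set g : ℝ → ℝ := fun y => (t / x₁) * (t ^ 2 + |x₁ - y| / x₁) ^ (-r) with hg_def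
  set h : E → ℝ := fun v => (t ^ 2 + ‖v‖ ^ 2) ^ (-q) with hh_def
  set G : ℝ → ℝ := fun s => (t ^ 2 + |s| / x₁) ^ (-r) with hG_def
  set H : ℝ → ℝ := fun u => (t ^ 2 * (1 + |u|)) ^ (-r) with hH_def
  set Ψ : E → ℝ := fun w => (t ^ 2 * (1 + ‖w‖ ^ 2)) ^ (-q) with hΨ_def
  have hHeq : H = fun u => (t ^ 2) ^ (-r) * (1 + |u|) ^ (-r) := by
    funext u; rw [hH_def]; exact Real.mul_rpow (sq_nonneg t) (by positivity)
  have hHi : Integrable H := by rw [hHeq]; exact hK1i.const_mul _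
  have hGH : G = fun s => H ((x₁ * t ^ 2)⁻¹ * s) := by
    funext s
    show (t ^ 2 + |s| / x₁) ^ (-r) = (t ^ 2 * (1 + |(x₁ * t ^ 2)⁻¹ * s|)) ^ (-r)
    congr 1
    rw [abs_mul, abs_inv, abs_of_pos (by positivity : (0:ℝ) < x₁ * t ^ 2)]
    field_simp
  have hGi : Integrable G := by
    rw [hGH]; exact hHi.comp_mul_left' (by positivity)
  have hgi : Integrable g := by
    have : g = fun y => (t / x₁) * G (x₁ - y) := rfl
    rw [this]
    exact (hGi.comp_sub_left x₁).const_mul _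
  have hΨeq : Ψ = fun w => (t ^ 2) ^ (-q) * (1 + ‖w‖ ^ 2) ^ (-q) := by
    funext w; rw [hΨ_def]; exact Real.mul_rpow (sq_nonneg t) (by positivity)
  have hΨi : Integrable Ψ := by rw [hΨeq]; exact hK2i.const_mul _
  have hhΨ : h = fun v => Ψ (t⁻¹ • v) := by
    funext v
    show (t ^ 2 + ‖v‖ ^ 2) ^ (-q) = (t ^ 2 * (1 + ‖t⁻¹ • v‖ ^ 2)) ^ (-q)
    congr 1
    rw [norm_smul, Real.norm_eq_abs, abs_inv, abs_of_pos ht, mul_pow]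
    field_simp
  have hhi : Integrable h := by
    rw [hhΨ]; exact hΨi.comp_smul (inv_ne_zero ht.ne')
  -- integral of g
  have hIg : ∫ y : ℝ, g y = (t / x₁) * ((x₁ * t ^ 2) * ((t ^ 2) ^ (-r) * K₁)) := by
    have e1 : ∫ y : ℝ, g y = (t / x₁) * ∫ y : ℝ, G (x₁ - y) := by
      rw [hg_def]; exact integral_const_mul _ _
    rw [e1, integral_sub_left_eq_self G volume x₁]
    congr 1
    simp only [hGH]
    rw [Measure.integral_comp_inv_mul_left H (x₁ * t ^ 2),
      abs_of_pos (by positivity : (0:ℝ) < x₁ * t ^ 2), smul_eq_mul]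
    congr 1
    rw [hHeq, integral_const_mul]
  -- integral of h
  have hIh : ∫ v : E, h v = t ^ m * ((t ^ 2) ^ (-q) * K₂) := by
    simp only [hhΨ]
    rw [Measure.integral_comp_inv_smul_of_nonneg volume Ψ ht.le, smul_eq_mul]
    congr 1
    · rw [hfr]
    · rw [hΨeq, integral_const_mul]
  -- pointwise bound
  have hfg : ∀ y : ℝ × E,
      (t / x₁) * (t ^ 2 + |x₁ - y.1| / x₁ + ‖y.2‖ ^ 2) ^ (-((m : ℝ) + 3 - α) / 2)
        ≤ g y.1 * h y.2 := by
    intro y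
    set u : ℝ := |x₁ - y.1| / x₁ with hu_def
    have hu0 : 0 ≤ u := div_nonneg (abs_nonneg _) hx0.le
    have hv0 : 0 ≤ ‖y.2‖ ^ 2 := sq_nonneg _
    have hB : (0 : ℝ) < t ^ 2 + u + ‖y.2‖ ^ 2 := by positivity
    have hexp : -((m : ℝ) + 3 - α) / 2 = -r + -q := by rw [hr_def, hq_def]; ring
    have hsplit : (t ^ 2 + u + ‖y.2‖ ^ 2) ^ (-((m : ℝ) + 3 - α) / 2)
        = (t ^ 2 + u + ‖y.2‖ ^ 2) ^ (-r) * (t ^ 2 + u + ‖y.2‖ ^ 2) ^ (-q) := by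
      rw [hexp, Real.rpow_add hB]
    have h1 : (t ^ 2 + u + ‖y.2‖ ^ 2) ^ (-r) ≤ (t ^ 2 + u) ^ (-r) :=
      Real.rpow_le_rpow_of_nonpos (by positivity) (by linarith) (by linarith)
    have h2 : (t ^ 2 + u + ‖y.2‖ ^ 2) ^ (-q) ≤ (t ^ 2 + ‖y.2‖ ^ 2) ^ (-q) :=
      Real.rpow_le_rpow_of_nonpos (by positivity) (by linarith) (by linarith)
    have hmul : (t ^ 2 + u + ‖y.2‖ ^ 2) ^ (-((m : ℝ) + 3 - α) / 2)
        ≤ (t ^ 2 + u) ^ (-r) * (t ^ 2 + ‖y.2‖ ^ 2) ^ (-q) := by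
      rw [hsplit]
      exact mul_le_mul h1 h2 (rpow_nonneg hB.le _) (rpow_nonneg (by positivity) _)
    calc (t / x₁) * (t ^ 2 + u + ‖y.2‖ ^ 2) ^ (-((m : ℝ) + 3 - α) / 2)
        ≤ (t / x₁) * ((t ^ 2 + u) ^ (-r) * (t ^ 2 + ‖y.2‖ ^ 2) ^ (-q)) := by
          exact mul_le_mul_of_nonneg_left hmul (div_nonneg ht.le hx0.le)
      _ = g y.1 * h y.2 := by simp only [hg_def, hh_def]; rw [hu_def]; ring
  -- monotonicity and product splitting
  have hprod : Integrable (fun y : ℝ × E => g y.1 * h y.2) := by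
    rw [Measure.volume_eq_prod]; exact hgi.mul_prod hhi
  have step1 : (∫ y : ℝ × E,
      (t / x₁) * (t ^ 2 + |x₁ - y.1| / x₁ + ‖y.2‖ ^ 2) ^ (-((m : ℝ) + 3 - α) / 2))
        ≤ ∫ y : ℝ × E, g y.1 * h y.2 := by
    refine integral_mono_of_nonneg (Filter.Eventually.of_forall fun y => ?_) hprod
      (Filter.Eventually.of_forall hfg)
    exact mul_nonneg (div_nonneg ht.le hx0.le) (rpow_nonneg (by positivity) _)
  have step2 : (∫ y : ℝ × E, g y.1 * h y.2) = (∫ y : ℝ, g y) * ∫ v : E, h v := by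
    rw [Measure.volume_eq_prod, integral_prod_mul]
  -- final arithmetic
  have e1 : (t ^ 2 : ℝ) ^ (-r) = t ^ (2 * -r) := by
    rw [← Real.rpow_natCast t 2, ← Real.rpow_mul ht.le]; norm_num
  have e2 : (t ^ 2 : ℝ) ^ (-q) = t ^ (2 * -q) := by
    rw [← Real.rpow_natCast t 2, ← Real.rpow_mul ht.le]; norm_num
  have key : (∫ y : ℝ, g y) * (∫ v : E, h v) = K₁ * K₂ * t ^ α := by
    rw [hIg, hIh, e1, e2]
    have e3 : (t : ℝ) ^ m = t ^ (m : ℝ) := (Real.rpow_natCast t m).symm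
    have e4 : (t : ℝ) ^ 2 = t ^ (2 : ℝ) := by
      rw [← Real.rpow_natCast t 2]; norm_num
    have e5 : (t : ℝ) = t ^ (1 : ℝ) := (Real.rpow_one t).symm
    have : (t / x₁) * ((x₁ * t ^ 2) * (t ^ (2 * -r) * K₁)) * (t ^ m * (t ^ (2 * -q) * K₂))
        = K₁ * K₂ * (t ^ (1:ℝ) * t ^ (2:ℝ) * t ^ (2 * -r) * t ^ ((m:ℝ)) * t ^ (2 * -q)) := by
      rw [← e3, ← e4, ← e5]; field_simp
    rw [this]
    congr 1
    rw [← Real.rpow_add ht, ← Real.rpow_add ht, ← Real.rpow_add ht, ← Real.rpow_add ht]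
    congr 1
    rw [hr_def, hq_def]; ring
  have htα : (0 : ℝ) < t ^ α := rpow_pos_of_pos ht _
  calc (∫ y : ℝ × E,
      (t / x₁) * (t ^ 2 + |x₁ - y.1| / x₁ + ‖y.2‖ ^ 2) ^ (-((m : ℝ) + 3 - α) / 2))
      ≤ (∫ y : ℝ, g y) * ∫ v : E, h v := by rw [← step2]; exact step1
    _ = K₁ * K₂ * t ^ α := key
    _ ≤ (K₁ * K₂ + 1) * t ^ α := by nlinarith
end
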